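/- arXiv:1902.08297 — 6 statements merged into one kernel-verified Lean document; each statement's English description precedes it below -/
import Mathlib

section
/- In a PL-game, for any fixed θ, the value ∇_θ f(θ, α₁) = ∇_θ f(θ, α₂) for any two maximizers α₁, α₂ ∈ argmax_α f(θ, α); i.e., the partial gradient in θ is constant across the set of maximizers. -/
set_option maxHeartbeats 1000000


open scoped RealInnerProductSpace

open InnerProductSpace in
/-- Descent-lemma type estimate from Lipschitz gradients. -/
lemma descent_aux {E : Type*} [NormedAddCommGroup E] [InnerProductSpace ℝ E] [CompleteSpace E]
    (φ : E → ℝ) (G : E → E) (L : ℝ) (hL : 0 ≤ L)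
    (hG : ∀ x, HasGradientAt φ (G x) x)
    (hLip : ∀ x y, ‖G x - G y‖ ≤ L * ‖x - y‖) (x y : E) :
    ‖φ y - φ x - ⟪G x, y - x⟫‖ ≤ L * ‖y - x‖ * ‖y - x‖ := by
  set ℓ : E →L[ℝ] ℝ := (toDual ℝ E (G x) : E →L[ℝ] ℝ)
  set ψ : E → ℝ := fun z => φ z - ℓ z with hψ
  have hder : ∀ z : E, HasFDerivAt ψ ((toDual ℝ E) (G z - G x) : E →L[ℝ] ℝ) z := by
    intro z
    have h1 : HasFDerivAt φ ((toDual ℝ E) (G z) : E →L[ℝ] ℝ) z := (hG z).hasFDerivAt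
    have h2 : HasFDerivAt (fun w : E => ℓ w) ℓ z := ℓ.hasFDerivAt
    have := h1.sub h2
    rw [map_sub]; exact this
  have hmv := Convex.norm_image_sub_le_of_norm_hasFDerivWithin_le
    (f := ψ) (f' := fun z => ((toDual ℝ E) (G z - G x) : E →L[ℝ] ℝ))
    (C := L * ‖y - x‖) (s := Metric.closedBall x ‖y - x‖)
    (fun z _ => (hder z).hasFDerivWithinAt)
    (by
      intro z hz
      have hz' : ‖z - x‖ ≤ ‖y - x‖ := by
        simpa [dist_eq_norm] using (Metric.mem_closedBall.mp hz)
      calc ‖((toDual ℝ E) (G z - G x) : E →L[ℝ] ℝ)‖ = ‖G z - G x‖ :=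
            (toDual ℝ E).norm_map _
        _ ≤ L * ‖z - x‖ := hLip z x
        _ ≤ L * ‖y - x‖ := by nlinarith)
    (convex_closedBall _ _)
    (Metric.mem_closedBall_self (norm_nonneg _))
    (Metric.mem_closedBall.mpr (le_of_eq (dist_eq_norm y x)))
  have hval : ψ y - ψ x = φ y - φ x - ⟪G x, y - x⟫ := by
    have : ℓ y - ℓ x = ⟪G x, y - x⟫ := by
      simp [ℓ, toDual_apply_apply, inner_sub_right]
    simp only [ψ]; linarith
  rw [hval] at hmv
  exact hmv

/-- In a PL-game, the partial gradient ∇_θ f(θ, ·) is constant across the set of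
    maximizers of f(θ, ·). -/
theorem grad_theta_constant_on_argmax {m n : ℕ}
    (f : EuclideanSpace ℝ (Fin m) → EuclideanSpace ℝ (Fin n) → ℝ)
    (g : EuclideanSpace ℝ (Fin m) → ℝ)
    (Gθ : EuclideanSpace ℝ (Fin m) → EuclideanSpace ℝ (Fin n) → EuclideanSpace ℝ (Fin m))
    (Gα : EuclideanSpace ℝ (Fin m) → EuclideanSpace ℝ (Fin n) → EuclideanSpace ℝ (Fin n))
    (μ L₁₁ L₁₂ L₂₂ : ℝ) (hμ : 0 < μ) (hL11 : 0 ≤ L₁₁) (hL12 : 0 ≤ L₁₂) (hL22 : 0 ≤ L₂₂)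
    (A : EuclideanSpace ℝ (Fin m) → Set (EuclideanSpace ℝ (Fin n)))
    (hA : ∀ θ, A θ = {α | ∀ α', f θ α' ≤ f θ α})
    (hAne : ∀ θ, (A θ).Nonempty) (hAcl : ∀ θ, IsClosed (A θ))
    (hg : ∀ θ α, α ∈ A θ → g θ = f θ α)
    (hGθ : ∀ θ α, HasGradientAt (fun t => f t α) (Gθ θ α) θ)
    (hGα : ∀ θ α, HasGradientAt (fun a => f θ a) (Gα θ α) α)
    (hLipθθ : ∀ α θ₁ θ₂, ‖Gθ θ₁ α - Gθ θ₂ α‖ ≤ L₁₁ * ‖θ₁ - θ₂‖)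
    (hLipθα : ∀ θ α₁ α₂, ‖Gθ θ α₁ - Gθ θ α₂‖ ≤ L₁₂ * ‖α₁ - α₂‖)
    (hLipαθ : ∀ α θ₁ θ₂, ‖Gα θ₁ α - Gα θ₂ α‖ ≤ L₁₂ * ‖θ₁ - θ₂‖)
    (hLipαα : ∀ θ α₁ α₂, ‖Gα θ α₁ - Gα θ α₂‖ ≤ L₂₂ * ‖α₁ - α₂‖)
    (hPL : ∀ θ α, μ * (g θ - f θ α) ≤ (1/2) * ‖Gα θ α‖^2) :
    ∀ θ α₁ α₂, α₁ ∈ A θ → α₂ ∈ A θ → Gθ θ α₁ = Gθ θ α₂ := by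
  intro θ α₁ α₂ h1 h2
  -- the gradient in α vanishes at any maximizer
  have hGα0 : Gα θ α₂ = 0 := by
    have hmax : IsLocalMax (fun a => f θ a) α₂ := by
      apply Filter.Eventually.of_forall
      intro a
      rw [hA] at h2
      exact h2 a
    have := hmax.hasFDerivAt_eq_zero (hGα θ α₂).hasFDerivAt
    have := congrArg (InnerProductSpace.toDual ℝ (EuclideanSpace ℝ (Fin n))).symm this
    simpa using this
  -- key constant
  set Δ : EuclideanSpace ℝ (Fin m) := Gθ θ α₁ - Gθ θ α₂ with hΔ
  set C : ℝ := 2 * L₁₁ + L₁₂ ^ 2 / (2 * μ) with hC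
  have hC0 : 0 ≤ C := by positivity
  have hfeq : f θ α₁ = f θ α₂ := by rw [← hg θ α₁ h1, ← hg θ α₂ h2]
  -- main inequality for every point y
  have key : ∀ y : EuclideanSpace ℝ (Fin m),
      ⟪Δ, y - θ⟫ ≤ C * ‖y - θ‖ ^ 2 := by
    intro y
    -- descent estimates
    have d1 := descent_aux (fun t => f t α₁) (fun t => Gθ t α₁) L₁₁ hL11
      (fun t => hGθ t α₁) (fun a b => hLipθθ α₁ a b) θ y
    have d2 := descent_aux (fun t => f t α₂) (fun t => Gθ t α₂) L₁₁ hL11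
      (fun t => hGθ t α₂) (fun a b => hLipθθ α₂ a b) θ y
    rw [Real.norm_eq_abs, abs_le] at d1 d2
    -- upper value bound from PL
    obtain ⟨β, hβ⟩ := hAne y
    have hgyβ : g y = f y β := hg y β hβ
    have hfy1 : f y α₁ ≤ g y := by
      rw [hgyβ]; rw [hA] at hβ; exact hβ α₁
    have hGlip : ‖Gα y α₂‖ ≤ L₁₂ * ‖y - θ‖ := by
      have := hLipαθ α₂ y θ
      rwa [hGα0, sub_zero] at this
    have hPLy := hPL y α₂
    have hsq : ‖Gα y α₂‖ ^ 2 ≤ (L₁₂ * ‖y - θ‖) ^ 2 := by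
      apply sq_le_sq' _ hGlip
      nlinarith [norm_nonneg (Gα y α₂), mul_nonneg hL12 (norm_nonneg (y - θ))]
    have hub : f y α₁ - f y α₂ ≤ L₁₂ ^ 2 / (2 * μ) * ‖y - θ‖ ^ 2 := by
      have h3 : μ * (g y - f y α₂) ≤ (1 / 2) * (L₁₂ * ‖y - θ‖) ^ 2 := le_trans hPLy (by nlinarith)
      have h4 : f y α₁ - f y α₂ ≤ g y - f y α₂ := by linarith
      have h5 : g y - f y α₂ ≤ (1 / 2) * (L₁₂ * ‖y - θ‖) ^ 2 / μ := by
        rw [le_div_iff₀ hμ]; nlinarith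
      calc f y α₁ - f y α₂ ≤ (1 / 2) * (L₁₂ * ‖y - θ‖) ^ 2 / μ := le_trans h4 h5
        _ = L₁₂ ^ 2 / (2 * μ) * ‖y - θ‖ ^ 2 := by ring
    have hinner : ⟪Δ, y - θ⟫ = ⟪Gθ θ α₁, y - θ⟫ - ⟪Gθ θ α₂, y - θ⟫ := by
      rw [hΔ, inner_sub_left]
    rw [hinner]
    have hnn : L₁₁ * ‖y - θ‖ * ‖y - θ‖ = L₁₁ * ‖y - θ‖ ^ 2 := by ring
    rw [hnn] at d1 d2
    have hCexp : C * ‖y - θ‖ ^ 2 = 2 * L₁₁ * ‖y - θ‖ ^ 2 + L₁₂ ^ 2 / (2 * μ) * ‖y - θ‖ ^ 2 := by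
      rw [hC]; ring
    have e1 : ⟪Gθ θ α₁, y - θ⟫ ≤ f y α₁ - f θ α₁ + L₁₁ * ‖y - θ‖ ^ 2 := by linarith [d1.1]
    have e2 : f y α₂ - f θ α₂ - L₁₁ * ‖y - θ‖ ^ 2 ≤ ⟪Gθ θ α₂, y - θ⟫ := by linarith [d2.2]
    calc ⟪Gθ θ α₁, y - θ⟫ - ⟪Gθ θ α₂, y - θ⟫
        ≤ (f y α₁ - f θ α₁ + L₁₁ * ‖y - θ‖ ^ 2) - (f y α₂ - f θ α₂ - L₁₁ * ‖y - θ‖ ^ 2) :=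
          sub_le_sub e1 e2
      _ = (f y α₁ - f y α₂) + 2 * (L₁₁ * ‖y - θ‖ ^ 2) := by rw [hfeq]; ring
      _ ≤ L₁₂ ^ 2 / (2 * μ) * ‖y - θ‖ ^ 2 + 2 * (L₁₁ * ‖y - θ‖ ^ 2) :=
          add_le_add_left hub _
      _ = C * ‖y - θ‖ ^ 2 := by rw [hC]; ring
  -- specialize to y = θ + t • Δ and take t → 0
  have hsqle : ∀ t : ℝ, 0 < t → ‖Δ‖ ^ 2 ≤ C * ‖Δ‖ ^ 2 * t := by
    intro t ht
    have := key (θ + t • Δ)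
    have hy : θ + t • Δ - θ = t • Δ := by abel
    rw [hy] at this
    rw [real_inner_smul_right, real_inner_self_eq_norm_sq, norm_smul] at this
    have habs : ‖t‖ = t := abs_of_pos ht
    rw [habs] at this
    have h2 : t * ‖Δ‖ ^ 2 ≤ C * (t ^ 2 * ‖Δ‖ ^ 2) := by nlinarith [norm_nonneg Δ]
    nlinarith [norm_nonneg Δ]
  have hzero : ‖Δ‖ ^ 2 ≤ 0 := by
    apply le_of_forall_pos_le_add
    intro ε hε
    rcases eq_or_lt_of_le (mul_nonneg hC0 (sq_nonneg ‖Δ‖)) with h | h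
    · have := hsqle 1 one_pos
      rw [← h] at this; simpa using le_trans this (by linarith)
    · have ht : 0 < ε / (C * ‖Δ‖ ^ 2) := div_pos hε h
      have := hsqle _ ht
      rw [mul_div_cancel₀ _ (ne_of_gt h)] at this
      linarith
  have : Δ = 0 := by
    have := sq_nonneg ‖Δ‖
    have h0 : ‖Δ‖ ^ 2 = 0 := le_antisymm hzero this
    have : ‖Δ‖ = 0 := by nlinarith [norm_nonneg Δ]
    exact norm_eq_zero.mp this
  exact sub_eq_zero.mp this
end

section
/- Under concavity of f(θ, ·) on a convex compact set A and Assumption 1 (Lipschitz gradients with constants L₁₁, L₁₂, L₂₂), the regularized value function g_λ(θ) = max_{α∈A} [f(θ,α) − (λ/2)‖α − ᾱ‖²] is differentiable and its gradient is L-Lipschitz with L = L₁₁ + L₁₂²/λ. -/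
open scoped RealInnerProductSpace

section Helpers

variable {F : Type*} [NormedAddCommGroup F] [InnerProductSpace ℝ F] [CompleteSpace F]

lemma myHasGradientAt_sub {g₁ g₂ : F → ℝ} {G₁ G₂ : F} {x : F}
    (h₁ : HasGradientAt g₁ G₁ x) (h₂ : HasGradientAt g₂ G₂ x) :
    HasGradientAt (fun y => g₁ y - g₂ y) (G₁ - G₂) x := by
  rw [hasGradientAt_iff_hasFDerivAt]
  rw [map_sub]
  exact h₁.hasFDerivAt.sub h₂.hasFDerivAt

lemma myHasDerivAt_line {g : F → ℝ} {G : F} {x v : F} {t₀ : ℝ}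
    (hG : HasGradientAt g G (x + t₀ • v)) :
    HasDerivAt (fun t : ℝ => g (x + t • v)) ⟪G, v⟫ t₀ := by
  have hL : HasDerivAt (fun t : ℝ => x + t • v) v t₀ := by
    simpa using ((hasDerivAt_id t₀).smul_const v).const_add x
  exact (by simpa using hG.hasFDerivAt.comp_hasDerivAt t₀ hL :
    HasDerivAt (g ∘ fun t : ℝ => x + t • v) ⟪G, v⟫ t₀)

lemma myDeriv_le_of_slope_le {φ : ℝ → ℝ} {d c : ℝ} (hφ : HasDerivAt φ d 0)
    (h : ∀ t ∈ Set.Ioc (0:ℝ) 1, φ t ≤ φ 0 + c * t) : d ≤ c := by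
  have htend : Filter.Tendsto (slope φ 0) (nhdsWithin 0 (Set.Ioi 0)) (nhds d) :=
    (hasDerivAt_iff_tendsto_slope.1 hφ).mono_left
      (nhdsWithin_mono _ (fun t ht => ne_of_gt ht))
  refine le_of_tendsto htend ?_
  have hmem : Set.Ioc (0:ℝ) 1 ∈ nhdsWithin (0:ℝ) (Set.Ioi 0) :=
    Ioc_mem_nhdsGT_of_mem (by constructor <;> norm_num)
  filter_upwards [hmem] with t ht
  have ht0 : (0:ℝ) < t := ht.1
  have := h t ht
  rw [slope_def_field, sub_zero, div_le_iff₀ ht0]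
  linarith

lemma myLe_deriv_of_slope_ge {φ : ℝ → ℝ} {d c : ℝ} (hφ : HasDerivAt φ d 0)
    (h : ∀ t ∈ Set.Ioc (0:ℝ) 1, φ 0 + c * t ≤ φ t) : c ≤ d := by
  have := myDeriv_le_of_slope_le (c := -c) hφ.neg (fun t ht => by
    have := h t ht
    show -φ t ≤ -φ 0 + -c * t
    linarith)
  linarith

lemma myConcave_grad_ineq {A : Set F} {f : F → ℝ} (hf : ConcaveOn ℝ A f)
    {x y : F} (hx : x ∈ A) (hy : y ∈ A) {G : F} (hG : HasGradientAt f G x) :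
    f y - f x ≤ ⟪G, y - x⟫ := by
  have hd : HasDerivAt (fun t : ℝ => f (x + t • (y - x))) ⟪G, y - x⟫ 0 :=
    myHasDerivAt_line (by simpa using hG)
  refine myLe_deriv_of_slope_ge hd (fun t ht => ?_)
  have hmem : x + t • (y - x) = (1 - t) • x + t • y := by
    rw [smul_sub, sub_smul, one_smul]; abel
  have := hf.2 hx hy (by linarith [ht.2] : (0:ℝ) ≤ 1 - t) (le_of_lt ht.1) (by ring)
  rw [← hmem] at this
  simp only [smul_eq_mul] at this
  simp only [zero_smul, add_zero]
  linarith

lemma myFOC {A : Set F} (hA : Convex ℝ A) {h : F → ℝ} {x : F} (hx : x ∈ A)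
    (hmax : IsMaxOn h A x) {H : F} (hH : HasGradientAt h H x) {y : F} (hy : y ∈ A) :
    ⟪H, y - x⟫ ≤ 0 := by
  have hd : HasDerivAt (fun t : ℝ => h (x + t • (y - x))) ⟪H, y - x⟫ 0 :=
    myHasDerivAt_line (by simpa using hH)
  have := myDeriv_le_of_slope_le (c := 0) hd (fun t ht => by
    have hmem : x + t • (y - x) ∈ A := by
      have : x + t • (y - x) = (1 - t) • x + t • y := by
        rw [smul_sub, sub_smul, one_smul]; abel
      rw [this]
      exact hA hx hy (by linarith [ht.2]) (le_of_lt ht.1) (by ring)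
    have := hmax hmem
    simp only [smul_zero, zero_smul] at this ⊢
    simpa using this)
  simpa using this

lemma myHasGradientAt_quad (lam : ℝ) (abar x : F) :
    HasGradientAt (fun a => (lam/2) * ‖a - abar‖^2) (lam • (x - abar)) x := by
  rw [hasGradientAt_iff_isLittleO]
  have heq : ∀ y : F, (lam/2) * ‖y - abar‖^2 - (lam/2) * ‖x - abar‖^2
      - ⟪lam • (x - abar), y - x⟫ = (lam/2) * ‖y - x‖^2 := by
    intro y
    rw [real_inner_smul_left]
    have h1 : y - abar = (y - x) + (x - abar) := by abel
    rw [h1, norm_add_sq_real]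
    have h2 : ⟪x - abar, y - x⟫ = ⟪y - x, x - abar⟫ := real_inner_comm _ _
    rw [h2]; ring
  have : (fun y : F => (lam/2) * ‖y - x‖^2) =o[nhds x] fun y => y - x := by
    rw [Asymptotics.isLittleO_iff]
    intro c hc
    have hpos : 0 < c / (|lam|/2 + 1) := by positivity
    filter_upwards [Metric.closedBall_mem_nhds x hpos] with y hy
    have hdist : ‖y - x‖ ≤ c / (|lam|/2 + 1) := by
      rw [← dist_eq_norm]; exact hy
    have hnn : (0:ℝ) ≤ ‖y - x‖ := norm_nonneg _
    rw [Real.norm_eq_abs, abs_mul, abs_of_nonneg (by positivity : (0:ℝ) ≤ ‖y - x‖^2),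
      abs_div, abs_two]
    have h3 : |lam| / 2 * ‖y - x‖ ≤ c := by
      have := mul_le_mul_of_nonneg_left hdist (by positivity : (0:ℝ) ≤ |lam|/2 + 1)
      rw [mul_div_cancel₀ _ (by positivity : (|lam|/2 + 1) ≠ 0)] at this
      nlinarith
    calc |lam| / 2 * ‖y - x‖^2 = (|lam|/2 * ‖y - x‖) * ‖y - x‖ := by ring
      _ ≤ c * ‖y - x‖ := mul_le_mul_of_nonneg_right (by nlinarith) hnn
  refine this.congr' ?_ (Filter.EventuallyEq.refl _ _)
  filter_upwards with y
  exact (heq y).symm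

lemma myQuadBound {g : F → ℝ} {G : F → F} {L : ℝ} (hL : 0 ≤ L)
    (hg : ∀ y, HasGradientAt g (G y) y)
    (hLip : ∀ y z, ‖G y - G z‖ ≤ L * ‖y - z‖) (x y : F) :
    |g y - g x - ⟪G x, y - x⟫| ≤ L/2 * ‖y - x‖^2 := by
  set v := y - x with hv
  have hxy : x + v = y := by rw [hv]; abel
  have hφ : ∀ t : ℝ, HasDerivAt (fun s : ℝ => g (x + s • v)) ⟪G (x + t • v), v⟫ t :=
    fun t => myHasDerivAt_line (hg _)
  have hbound : ∀ t ∈ Set.Ioo (0:ℝ) 1,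
      |⟪G (x + t • v), v⟫ - ⟪G x, v⟫| ≤ L*‖v‖^2*t := by
    intro t ht
    rw [← inner_sub_left]
    refine (abs_real_inner_le_norm _ _).trans ?_
    calc ‖G (x + t • v) - G x‖ * ‖v‖ ≤ (L * ‖(x + t • v) - x‖) * ‖v‖ :=
          mul_le_mul_of_nonneg_right (hLip _ _) (norm_nonneg _)
      _ = L*‖v‖^2*t := by
          rw [show x + t • v - x = t • v by abel, norm_smul, Real.norm_eq_abs,
            abs_of_pos ht.1]
          ring
  have hlin : ∀ t : ℝ, HasDerivAt (fun s : ℝ => s * ⟪G x, v⟫) ⟪G x, v⟫ t := by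
    intro t; simpa using (hasDerivAt_id t).mul_const (⟪G x, v⟫ : ℝ)
  have hsq : ∀ t : ℝ, HasDerivAt (fun s : ℝ => L*‖v‖^2*s^2/2) (L*‖v‖^2*t) t := by
    intro t
    have h := (hasDerivAt_pow 2 t).const_mul (L*‖v‖^2/2)
    have heq : (fun s : ℝ => L*‖v‖^2*s^2/2) = fun s : ℝ => L*‖v‖^2/2 * s^2 := by
      funext s; ring
    rw [heq]
    refine h.congr_deriv ?_
    push_cast
    ring
  have hu : ∀ t : ℝ, HasDerivAt
      (fun s : ℝ => g (x + s • v) - s * ⟪G x, v⟫ - L*‖v‖^2*s^2/2)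
      (⟪G (x + t • v), v⟫ - ⟪G x, v⟫ - L*‖v‖^2*t) t :=
    fun t => ((hφ t).sub (hlin t)).sub (hsq t)
  have hanti : AntitoneOn (fun s : ℝ => g (x + s • v) - s * ⟪G x, v⟫ - L*‖v‖^2*s^2/2)
      (Set.Icc 0 1) := by
    refine antitoneOn_of_deriv_nonpos (convex_Icc 0 1)
      (Differentiable.continuous (fun s => (hu s).differentiableAt)).continuousOn
      (fun t _ => ((hu t).differentiableAt).differentiableWithinAt) (fun t ht => ?_)
    rw [interior_Icc] at ht
    rw [(hu t).deriv]
    have := abs_le.1 (hbound t ht)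
    linarith [this.2]
  have hw : ∀ t : ℝ, HasDerivAt
      (fun s : ℝ => g (x + s • v) - s * ⟪G x, v⟫ + L*‖v‖^2*s^2/2)
      (⟪G (x + t • v), v⟫ - ⟪G x, v⟫ + L*‖v‖^2*t) t :=
    fun t => ((hφ t).sub (hlin t)).add (hsq t)
  have hmono : MonotoneOn (fun s : ℝ => g (x + s • v) - s * ⟪G x, v⟫ + L*‖v‖^2*s^2/2)
      (Set.Icc 0 1) := by
    refine monotoneOn_of_deriv_nonneg (convex_Icc 0 1)
      (Differentiable.continuous (fun s => (hw s).differentiableAt)).continuousOn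
      (fun t _ => ((hw t).differentiableAt).differentiableWithinAt) (fun t ht => ?_)
    rw [interior_Icc] at ht
    rw [(hw t).deriv]
    have := abs_le.1 (hbound t ht)
    linarith [this.1]
  have h01 : (0:ℝ) ∈ Set.Icc (0:ℝ) 1 := by norm_num
  have h11 : (1:ℝ) ∈ Set.Icc (0:ℝ) 1 := by norm_num
  have hU := hanti h01 h11 zero_le_one
  have hW := hmono h01 h11 zero_le_one
  simp only [one_smul, zero_smul, add_zero, hxy] at hU hW
  rw [abs_le]
  constructor <;> [linarith [hW]; linarith [hU]]

end Helpers

open scoped RealInnerProductSpace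

set_option maxHeartbeats 1000000 in
/-- The regularized value function g_λ(θ) = max_{α∈A} [f(θ,α) − (λ/2)‖α−ᾱ‖²] is
    differentiable with (L₁₁ + L₁₂²/λ)-Lipschitz gradient. -/
theorem regularized_value_function_smooth {m n : ℕ}
    (f : EuclideanSpace ℝ (Fin m) → EuclideanSpace ℝ (Fin n) → ℝ)
    (Gθ : EuclideanSpace ℝ (Fin m) → EuclideanSpace ℝ (Fin n) → EuclideanSpace ℝ (Fin m))
    (Gα : EuclideanSpace ℝ (Fin m) → EuclideanSpace ℝ (Fin n) → EuclideanSpace ℝ (Fin n))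
    (A : Set (EuclideanSpace ℝ (Fin n))) (abar : EuclideanSpace ℝ (Fin n))
    (lam L₁₁ L₁₂ L₂₂ : ℝ) (hlam : 0 < lam)
    (hL11 : 0 ≤ L₁₁) (hL12 : 0 ≤ L₁₂) (hL22 : 0 ≤ L₂₂)
    (hAconv : Convex ℝ A) (hAcpt : IsCompact A) (habar : abar ∈ A)
    (hconc : ∀ θ, ConcaveOn ℝ A (f θ))
    (hGθ : ∀ θ α, HasGradientAt (fun t => f t α) (Gθ θ α) θ)
    (hGα : ∀ θ α, HasGradientAt (fun a => f θ a) (Gα θ α) α)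
    (hLipθθ : ∀ α θ₁ θ₂, ‖Gθ θ₁ α - Gθ θ₂ α‖ ≤ L₁₁ * ‖θ₁ - θ₂‖)
    (hLipθα : ∀ θ α₁ α₂, ‖Gθ θ α₁ - Gθ θ α₂‖ ≤ L₁₂ * ‖α₁ - α₂‖)
    (hLipαθ : ∀ α θ₁ θ₂, ‖Gα θ₁ α - Gα θ₂ α‖ ≤ L₁₂ * ‖θ₁ - θ₂‖)
    (hLipαα : ∀ θ α₁ α₂, ‖Gα θ α₁ - Gα θ α₂‖ ≤ L₂₂ * ‖α₁ - α₂‖)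
    (αstar : EuclideanSpace ℝ (Fin m) → EuclideanSpace ℝ (Fin n))
    (hαstarA : ∀ θ, αstar θ ∈ A)
    (hαstarMax : ∀ θ, IsMaxOn (fun α => f θ α - (lam/2) * ‖α - abar‖^2) A (αstar θ))
    (glam : EuclideanSpace ℝ (Fin m) → ℝ)
    (hglam : ∀ θ, glam θ = f θ (αstar θ) - (lam/2) * ‖αstar θ - abar‖^2) :
    Differentiable ℝ glam ∧
    (∀ θ₁ θ₂, ‖gradient glam θ₁ - gradient glam θ₂‖ ≤ (L₁₁ + L₁₂^2 / lam) * ‖θ₁ - θ₂‖) := by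
  have hH : ∀ θ α, HasGradientAt (fun a => f θ a - (lam/2) * ‖a - abar‖^2)
      (Gα θ α - lam • (α - abar)) α :=
    fun θ α => myHasGradientAt_sub (hGα θ α) (myHasGradientAt_quad lam abar α)
  -- Lipschitz continuity of the maximizer
  have hαLip : ∀ θ₁ θ₂, ‖αstar θ₁ - αstar θ₂‖ ≤ (L₁₂/lam) * ‖θ₁ - θ₂‖ := by
    intro θ₁ θ₂
    set α₁ := αstar θ₁ with hα₁
    set α₂ := αstar θ₂ with hα₂
    have foc1 : ⟪Gα θ₁ α₁ - lam • (α₁ - abar), α₂ - α₁⟫ ≤ 0 :=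
      myFOC hAconv (hαstarA θ₁) (hαstarMax θ₁) (hH θ₁ α₁) (hαstarA θ₂)
    have foc2 : ⟪Gα θ₂ α₂ - lam • (α₂ - abar), α₁ - α₂⟫ ≤ 0 :=
      myFOC hAconv (hαstarA θ₂) (hαstarMax θ₂) (hH θ₂ α₂) (hαstarA θ₁)
    have hc1 := myConcave_grad_ineq (hconc θ₁) (hαstarA θ₁) (hαstarA θ₂) (hGα θ₁ α₁)
    have hc2 := myConcave_grad_ineq (hconc θ₁) (hαstarA θ₂) (hαstarA θ₁) (hGα θ₁ α₂)
    have hmono : ⟪Gα θ₁ α₁, α₁ - α₂⟫ - ⟪Gα θ₁ α₂, α₁ - α₂⟫ ≤ 0 := by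
      have e1 : ⟪Gα θ₁ α₁, α₂ - α₁⟫ = -⟪Gα θ₁ α₁, α₁ - α₂⟫ := by
        rw [show α₂ - α₁ = -(α₁ - α₂) by abel, inner_neg_right]
      rw [e1] at hc1
      linarith
    have e1 : ⟪Gα θ₁ α₁ - lam • (α₁ - abar), α₂ - α₁⟫
        = -⟪Gα θ₁ α₁, α₁ - α₂⟫ + lam * ⟪α₁ - abar, α₁ - α₂⟫ := by
      rw [show α₂ - α₁ = -(α₁ - α₂) by abel, inner_neg_right, inner_sub_left,
        real_inner_smul_left]
      ring
    have e2 : ⟪Gα θ₂ α₂ - lam • (α₂ - abar), α₁ - α₂⟫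
        = ⟪Gα θ₂ α₂, α₁ - α₂⟫ - lam * ⟪α₂ - abar, α₁ - α₂⟫ := by
      rw [inner_sub_left, real_inner_smul_left]
    have e3 : ⟪α₁ - abar, α₁ - α₂⟫ - ⟪α₂ - abar, α₁ - α₂⟫ = ‖α₁ - α₂‖^2 := by
      rw [← inner_sub_left, show α₁ - abar - (α₂ - abar) = α₁ - α₂ by abel]
      exact real_inner_self_eq_norm_sq _
    rw [e1] at foc1; rw [e2] at foc2
    have key : lam * ‖α₁ - α₂‖^2 ≤ ⟪Gα θ₁ α₂, α₁ - α₂⟫ - ⟪Gα θ₂ α₂, α₁ - α₂⟫ := by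
      nlinarith [foc1, foc2, hmono, e3]
    have hCS : ⟪Gα θ₁ α₂, α₁ - α₂⟫ - ⟪Gα θ₂ α₂, α₁ - α₂⟫
        ≤ (L₁₂ * ‖θ₁ - θ₂‖) * ‖α₁ - α₂‖ := by
      rw [← inner_sub_left]
      exact le_trans (real_inner_le_norm _ _)
        (mul_le_mul_of_nonneg_right (hLipαθ α₂ θ₁ θ₂) (norm_nonneg _))
    rcases eq_or_lt_of_le (norm_nonneg (α₁ - α₂)) with hz | hzpos
    · rw [← hz]; positivity
    · rw [div_mul_eq_mul_div, le_div_iff₀ hlam]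
      nlinarith [key, hCS]
  -- Danskin: gradient of glam
  have hGrad : ∀ θ, HasGradientAt glam (Gθ θ (αstar θ)) θ := by
    intro θ
    have hC : (0:ℝ) ≤ L₁₁/2 + L₁₂^2/lam := by positivity
    have hkey : ∀ θ', |glam θ' - glam θ - ⟪Gθ θ (αstar θ), θ' - θ⟫|
        ≤ (L₁₁/2 + L₁₂^2/lam) * ‖θ' - θ‖^2 := by
      intro θ'
      have hq1 := myQuadBound hL11 (fun t => hGθ t (αstar θ)) (hLipθθ (αstar θ)) θ θ'
      have hq2 := myQuadBound hL11 (fun t => hGθ t (αstar θ')) (hLipθθ (αstar θ')) θ θ'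
      have hmax1 : f θ' (αstar θ) - (lam/2) * ‖αstar θ - abar‖^2 ≤ glam θ' := by
        rw [hglam θ']; exact hαstarMax θ' (hαstarA θ)
      have hmax2 : f θ (αstar θ') - (lam/2) * ‖αstar θ' - abar‖^2 ≤ glam θ := by
        rw [hglam θ]; exact hαstarMax θ (hαstarA θ')
      have hg1 := hglam θ
      have hg2 := hglam θ'
      have hcross : ⟪Gθ θ (αstar θ') - Gθ θ (αstar θ), θ' - θ⟫
          ≤ L₁₂^2/lam * ‖θ' - θ‖^2 := by
        refine le_trans (real_inner_le_norm _ _) ?_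
        have h1 : ‖Gθ θ (αstar θ') - Gθ θ (αstar θ)‖ ≤ L₁₂ * ((L₁₂/lam) * ‖θ' - θ‖) :=
          le_trans (hLipθα θ _ _) (mul_le_mul_of_nonneg_left (hαLip θ' θ) hL12)
        calc ‖Gθ θ (αstar θ') - Gθ θ (αstar θ)‖ * ‖θ' - θ‖
            ≤ (L₁₂ * ((L₁₂/lam) * ‖θ' - θ‖)) * ‖θ' - θ‖ :=
              mul_le_mul_of_nonneg_right h1 (norm_nonneg _)
          _ = L₁₂^2/lam * ‖θ' - θ‖^2 := by ring
      have hsplit : ⟪Gθ θ (αstar θ'), θ' - θ⟫ - ⟪Gθ θ (αstar θ), θ' - θ⟫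
          = ⟪Gθ θ (αstar θ') - Gθ θ (αstar θ), θ' - θ⟫ := (inner_sub_left _ _ _).symm
      have ha1 := abs_le.1 hq1
      have ha2 := abs_le.1 hq2
      have hnn : (0:ℝ) ≤ L₁₂^2/lam * ‖θ' - θ‖^2 := by positivity
      have hexp : (L₁₁/2 + L₁₂^2/lam) * ‖θ' - θ‖^2
          = L₁₁/2 * ‖θ' - θ‖^2 + L₁₂^2/lam * ‖θ' - θ‖^2 := by ring
      rw [abs_le]
      constructor
      · linarith [ha1.1]
      · linarith [ha2.2, hcross, hsplit]
    rw [hasGradientAt_iff_isLittleO, Asymptotics.isLittleO_iff]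
    intro c hc
    have hC1 : (0:ℝ) < (L₁₁/2 + L₁₂^2/lam) + 1 := by linarith
    have hpos : 0 < c / ((L₁₁/2 + L₁₂^2/lam) + 1) := by positivity
    filter_upwards [Metric.closedBall_mem_nhds θ hpos] with θ' hθ'
    have hd : ‖θ' - θ‖ ≤ c / ((L₁₁/2 + L₁₂^2/lam) + 1) := by
      rw [← dist_eq_norm]; exact hθ'
    have hnn : (0:ℝ) ≤ ‖θ' - θ‖ := norm_nonneg _
    rw [Real.norm_eq_abs]
    refine (hkey θ').trans ?_
    calc (L₁₁/2 + L₁₂^2/lam) * ‖θ' - θ‖^2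
        = (L₁₁/2 + L₁₂^2/lam) * (‖θ' - θ‖ * ‖θ' - θ‖) := by ring
      _ ≤ ((L₁₁/2 + L₁₂^2/lam) + 1) * (c / ((L₁₁/2 + L₁₂^2/lam) + 1) * ‖θ' - θ‖) :=
          mul_le_mul (by linarith) (mul_le_mul_of_nonneg_right hd hnn)
            (mul_nonneg hnn hnn) (le_of_lt hC1)
      _ = c * ‖θ' - θ‖ := by
          rw [← mul_assoc, mul_div_cancel₀ _ (ne_of_gt hC1)]
  refine ⟨fun θ => (hGrad θ).differentiableAt, fun θ₁ θ₂ => ?_⟩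
  rw [(hGrad θ₁).gradient, (hGrad θ₂).gradient]
  have tri : ‖Gθ θ₁ (αstar θ₁) - Gθ θ₂ (αstar θ₂)‖
      ≤ ‖Gθ θ₁ (αstar θ₁) - Gθ θ₂ (αstar θ₁)‖ + ‖Gθ θ₂ (αstar θ₁) - Gθ θ₂ (αstar θ₂)‖ := by
    have h : Gθ θ₁ (αstar θ₁) - Gθ θ₂ (αstar θ₂)
        = (Gθ θ₁ (αstar θ₁) - Gθ θ₂ (αstar θ₁)) + (Gθ θ₂ (αstar θ₁) - Gθ θ₂ (αstar θ₂)) := by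
      abel
    rw [h]; exact norm_add_le _ _
  have h1 := hLipθθ (αstar θ₁) θ₁ θ₂
  have h2 := hLipθα θ₂ (αstar θ₁) (αstar θ₂)
  have h4 : L₁₂ * ‖αstar θ₁ - αstar θ₂‖ ≤ L₁₂ * ((L₁₂/lam) * ‖θ₁ - θ₂‖) :=
    mul_le_mul_of_nonneg_left (hαLip θ₁ θ₂) hL12
  have hexp : (L₁₁ + L₁₂^2/lam) * ‖θ₁ - θ₂‖
      = L₁₁ * ‖θ₁ - θ₂‖ + L₁₂ * ((L₁₂/lam) * ‖θ₁ - θ₂‖) := by ring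
  linarith
end

section
/- Let g : Θ → ℝ be L-smooth on a convex compact set Θ contained in a ball of radius R, with g_max ≥ max_θ ‖∇g(θ)‖. Suppose at each step θ_{t+1} = proj_Θ(θ_t − (1/L)(∇g(θ_t) + e_t)) with error ‖e_t‖ ≤ g_max. Then the stationarity measure X_t := −min{⟨∇g(θ_t) + e_t, θ − θ_t⟩ : θ ∈ Θ, ‖θ − θ_t‖ ≤ 1} satisfies ‖θ_{t+1} − θ_t‖ ≥ X_t / (2(g_max + LR)). -/
/-!
The projection inequality at `θ⁺ = θₜ₊₁` says `⟪v, θ - θ⁺⟫ ≥ L ⟪θₜ - θ⁺, θ - θ⁺⟫` for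
`v = ∇g(θₜ) + eₜ` and every `θ ∈ Θ`. Splitting `⟪v, θ - θₜ⟫ = ⟪v, θ - θ⁺⟫ + ⟪v, θ⁺ - θₜ⟫` and
applying Cauchy–Schwarz to both terms, with `‖θ - θ⁺‖ ≤ 2R` and `‖v‖ ≤ 2 g_max`, bounds every
value in the infimum below by `-2 (g_max + L R) ‖θ⁺ - θₜ‖`.
-/

open scoped RealInnerProductSpace

section ProjectedStep

variable {E : Type*} [NormedAddCommGroup E] [InnerProductSpace ℝ E]

lemma mul_inner_le_inner_of_inner_step_nonpos {L : ℝ} (hL : 0 < L) {x y v z : E}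
    (h : ⟪x - (1 / L) • v - y, z - y⟫ ≤ 0) :
    L * ⟪x - y, z - y⟫ ≤ ⟪v, z - y⟫ := by
  rw [sub_right_comm, inner_sub_left, real_inner_smul_left] at h
  have := mul_le_mul_of_nonneg_left h hL.le
  rw [mul_sub, ← mul_assoc, mul_one_div_cancel hL.ne', one_mul, mul_zero] at this
  linarith

lemma neg_mul_norm_le_inner_of_inner_step_nonpos {L : ℝ} (hL : 0 < L) {x y v z : E}
    (h : ⟪x - (1 / L) • v - y, z - y⟫ ≤ 0) :
    -((‖v‖ + L * ‖z - y‖) * ‖y - x‖) ≤ ⟪v, z - x⟫ := by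
  have hstep := mul_inner_le_inner_of_inner_step_nonpos hL h
  have hxy : -(‖y - x‖ * ‖z - y‖) ≤ ⟪x - y, z - y⟫ := by
    rw [← norm_neg (y - x), neg_sub]
    exact (abs_le.1 (abs_real_inner_le_norm _ _)).1
  have hv : -(‖v‖ * ‖y - x‖) ≤ ⟪v, y - x⟫ := (abs_le.1 (abs_real_inner_le_norm _ _)).1
  have hsplit : ⟪v, z - x⟫ = ⟪v, z - y⟫ + ⟪v, y - x⟫ := by
    rw [← inner_add_right, sub_add_sub_cancel]
  nlinarith [mul_le_mul_of_nonneg_left hxy hL.le]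

end ProjectedStep

theorem projected_step_movement_lower_bound_general {n : ℕ}
    (G : EuclideanSpace ℝ (Fin n) → EuclideanSpace ℝ (Fin n))
    (Θ : Set (EuclideanSpace ℝ (Fin n))) (L R gmax : ℝ)
    (hL : 0 < L)
    (hball : Θ ⊆ Metric.closedBall 0 R)
    (hgmax : ∀ θ ∈ Θ, ‖G θ‖ ≤ gmax)
    (θt θnext e : EuclideanSpace ℝ (Fin n))
    (hθt : θt ∈ Θ) (hθnext : θnext ∈ Θ) (he : ‖e‖ ≤ gmax)
    (hproj : ∀ θ ∈ Θ, ⟪θt - (1/L) • (G θt + e) - θnext, θ - θnext⟫ ≤ 0) :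
    -sInf ((fun θ => ⟪G θt + e, θ - θt⟫) '' {θ | θ ∈ Θ ∧ ‖θ - θt‖ ≤ 1})
      ≤ 2 * (gmax + L * R) * ‖θnext - θt‖ := by
  rw [neg_le]
  refine le_csInf ⟨_, θt, ⟨hθt, by simp⟩, rfl⟩ ?_
  rintro _ ⟨θ, ⟨hθ, -⟩, rfl⟩
  have hv : ‖G θt + e‖ ≤ 2 * gmax := by
    linarith [norm_add_le (G θt) e, hgmax θt hθt]
  have hdiam : ‖θ - θnext‖ ≤ 2 * R := by
    rw [two_mul]
    exact norm_sub_le_of_le (mem_closedBall_zero_iff.1 (hball hθ))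
      (mem_closedBall_zero_iff.1 (hball hθnext))
  calc -(2 * (gmax + L * R) * ‖θnext - θt‖)
      ≤ -((‖G θt + e‖ + L * ‖θ - θnext‖) * ‖θnext - θt‖) := by
        gcongr
        linarith [mul_le_mul_of_nonneg_left hdiam hL.le]
    _ ≤ ⟪G θt + e, θ - θt⟫ :=
        neg_mul_norm_le_inner_of_inner_step_nonpos hL (hproj θ hθ)

/-- The inexact projected gradient step moves at least X_t / (2(g_max + LR)), where
    X_t is the (error-perturbed) first-order stationarity measure. -/
theorem projected_step_movement_lower_bound {n : ℕ}
    (g : EuclideanSpace ℝ (Fin n) → ℝ)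
    (G : EuclideanSpace ℝ (Fin n) → EuclideanSpace ℝ (Fin n))
    (Θ : Set (EuclideanSpace ℝ (Fin n))) (L R gmax : ℝ)
    (hL : 0 < L) (hR : 0 < R) (hgmax1 : 1 ≤ gmax)
    (hconv : Convex ℝ Θ) (hcpt : IsCompact Θ)
    (hball : Θ ⊆ Metric.closedBall 0 R)
    (hgrad : ∀ θ, HasGradientAt g (G θ) θ)
    (hgmax : ∀ θ ∈ Θ, ‖G θ‖ ≤ gmax)
    (θt θnext e : EuclideanSpace ℝ (Fin n))
    (hθt : θt ∈ Θ) (hθnext : θnext ∈ Θ) (he : ‖e‖ ≤ gmax)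
    (hproj : ∀ θ ∈ Θ, ⟪θt - (1/L) • (G θt + e) - θnext, θ - θnext⟫ ≤ 0) :
    -sInf ((fun θ => ⟪G θt + e, θ - θt⟫) '' {θ | θ ∈ Θ ∧ ‖θ - θt‖ ≤ 1})
      ≤ 2 * (gmax + L * R) * ‖θnext - θt‖ :=
  projected_step_movement_lower_bound_general G Θ L R gmax hL hball hgmax θt θnext e hθt hθnext he
    hproj
end

section
/- Let g : ℝᵈ → ℝ be L̃-smooth on a convex set Θ, and suppose a Frank-Wolfe-type step θ_{t+1} = θ_t + (X_t/L̃) ŝ_t is taken, where ŝ_t minimizes ⟨∇g(θ_t) + e_t, s⟩ over {s : θ_t + s ∈ Θ, ‖s‖ ≤ 1} and X_t = −⟨∇g(θ_t) + e_t, ŝ_t⟩ ≥ 0. Then g(θ_{t+1}) ≤ g(θ_t) + (X_t/L̃)‖e_t‖ − X_t²/(2L̃). -/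
open scoped RealInnerProductSpace

/-!
A step of length `t` along a unit-bounded direction `s` gains `t ⟪∇g, s⟫` and loses at most
`L t² / 2` by smoothness. Since `‖s‖ ≤ 1`, replacing the true gradient by the estimate `∇g + e`
costs at most `‖e‖` in `⟪∇g, s⟫`, so the gain is at most `t (‖e‖ - X)`; the step length
`t = X / L` balances gain and loss and leaves `- X² / (2L)`.
-/

section
variable {E : Type*} [NormedAddCommGroup E] [InnerProductSpace ℝ E]

theorem real_inner_le_inner_add_add_norm (a e : E) {s : E} (hs : ‖s‖ ≤ 1) :
    ⟪a, s⟫ ≤ ⟪a + e, s⟫ + ‖e‖ := by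
  have hcs : -⟪e, s⟫ ≤ ‖e‖ := calc
    -⟪e, s⟫ ≤ ‖e‖ * ‖s‖ := (neg_le_abs _).trans (abs_real_inner_le_norm e s)
    _ ≤ ‖e‖ := mul_le_of_le_one_right (norm_nonneg e) hs
  rw [inner_add_left]
  linarith

theorem apply_add_smul_le_of_quadratic_upper_bound {g : E → ℝ} {x d s : E} {L : ℝ}
    (hL : 0 ≤ L) (hg : ∀ y, g y ≤ g x + ⟪d, y - x⟫ + (L / 2) * ‖y - x‖ ^ 2)
    (hs : ‖s‖ ≤ 1) (t : ℝ) :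
    g (x + t • s) ≤ g x + t * ⟪d, s⟫ + (L / 2) * t ^ 2 := by
  have hnorm : ‖t • s‖ ^ 2 ≤ t ^ 2 := by
    rw [norm_smul, mul_pow, Real.norm_eq_abs, sq_abs]
    exact mul_le_of_le_one_right (sq_nonneg t) (pow_le_one₀ (norm_nonneg s) hs)
  calc g (x + t • s) ≤ g x + ⟪d, t • s⟫ + (L / 2) * ‖t • s‖ ^ 2 := by
        simpa only [add_sub_cancel_left] using hg (x + t • s)
    _ ≤ g x + t * ⟪d, s⟫ + (L / 2) * t ^ 2 := by
        rw [real_inner_smul_right]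
        gcongr

end

theorem frank_wolfe_descent_step_general {n : ℕ}
    (g : EuclideanSpace ℝ (Fin n) → ℝ)
    (G : EuclideanSpace ℝ (Fin n) → EuclideanSpace ℝ (Fin n))
    (Lt : ℝ) (hLt : 0 < Lt)
    (hsmooth : ∀ x y, g y ≤ g x + ⟪G x, y - x⟫ + (Lt/2) * ‖y - x‖^2)
    (θt e shat : EuclideanSpace ℝ (Fin n))
    (hs1 : ‖shat‖ ≤ 1)
    (X : ℝ) (hX : X = -⟪G θt + e, shat⟫) (hXnn : 0 ≤ X)
    (θnext : EuclideanSpace ℝ (Fin n)) (hθnext : θnext = θt + (X / Lt) • shat) :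
    g θnext ≤ g θt + (X / Lt) * ‖e‖ - X^2 / (2 * Lt) := by
  subst hθnext
  have hstep := apply_add_smul_le_of_quadratic_upper_bound hLt.le (hsmooth θt) hs1 (X / Lt)
  have hdir : ⟪G θt, shat⟫ ≤ -X + ‖e‖ := by
    linarith [real_inner_le_inner_add_add_norm (G θt) e hs1]
  have hgain : X / Lt * ⟪G θt, shat⟫ ≤ X / Lt * (-X + ‖e‖) :=
    mul_le_mul_of_nonneg_left hdir (by positivity)
  calc g (θt + (X / Lt) • shat) ≤ g θt + X / Lt * (-X + ‖e‖) + (Lt / 2) * (X / Lt) ^ 2 := by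
        linarith
    _ = g θt + (X / Lt) * ‖e‖ - X ^ 2 / (2 * Lt) := by
        field_simp
        ring

/-- Descent inequality for one inexact Frank–Wolfe step:
    g(θ_{t+1}) ≤ g(θ_t) + (X_t/L̃)‖e_t‖ − X_t²/(2L̃). -/
theorem frank_wolfe_descent_step {n : ℕ}
    (g : EuclideanSpace ℝ (Fin n) → ℝ)
    (G : EuclideanSpace ℝ (Fin n) → EuclideanSpace ℝ (Fin n))
    (Θ : Set (EuclideanSpace ℝ (Fin n))) (Lt : ℝ) (hLt : 0 < Lt)
    (hconv : Convex ℝ Θ)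
    (hgrad : ∀ θ, HasGradientAt g (G θ) θ)
    (hsmooth : ∀ x y, g y ≤ g x + ⟪G x, y - x⟫ + (Lt/2) * ‖y - x‖^2)
    (θt e shat : EuclideanSpace ℝ (Fin n))
    (hθt : θt ∈ Θ) (hfeas : θt + shat ∈ Θ) (hs1 : ‖shat‖ ≤ 1)
    (hmin : ∀ s, θt + s ∈ Θ → ‖s‖ ≤ 1 → ⟪G θt + e, shat⟫ ≤ ⟪G θt + e, s⟫)
    (X : ℝ) (hX : X = -⟪G θt + e, shat⟫) (hXnn : 0 ≤ X)
    (θnext : EuclideanSpace ℝ (Fin n)) (hθnext : θnext = θt + (X / Lt) • shat) :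
    g θnext ≤ g θt + (X / Lt) * ‖e‖ - X^2 / (2 * Lt) :=
  frank_wolfe_descent_step_general g G Lt hLt hsmooth θt e shat hs1 X hX hXnn θnext hθnext
end

section
/- Suppose for each t the descent inequality g(θ_{t+1}) ≤ g(θ_t) + (X_t/L̃)‖e_t‖ − X_t²/(2L̃) holds with X_t ≤ 2g_max and ‖e_t‖ ≤ ε²/(16 g_max), and g(θ₀) − inf g ≤ Δ. Then (1/T)∑_{t=0}^{T−1} X_t² ≤ 2L̃Δ/T + ε²/4, and in particular if T ≥ 8L̃Δ/ε² there exists t with X_t ≤ ε. -/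
/-!
Multiplying the descent inequality by `2L̃` gives
`X_t² ≤ 2L̃ (g(θ_t) - g(θ_{t+1})) + 2 X_t ‖e_t‖ ≤ 2L̃ (g(θ_t) - g(θ_{t+1})) + ε²/4`,
since `X_t ‖e_t‖ ≤ 2g_max · ε²/(16 g_max) = ε²/8`. Summing, the first terms telescope to at most
`2L̃Δ`. If `T ≥ 8L̃Δ/ε²`, the resulting bound on `∑ X_t²` is below `T ε²`, so some `X_t² ≤ ε²`.
-/

open Finset

lemma sq_le_of_descent {L x e g g' : ℝ} (hL : 0 < L)
    (h : g' ≤ g + x / L * e - x ^ 2 / (2 * L)) :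
    x ^ 2 ≤ 2 * L * (g - g') + 2 * (x * e) := by
  have h2L := mul_le_mul_of_nonneg_left h (by positivity : (0 : ℝ) ≤ 2 * L)
  have hexpand : 2 * L * (g + x / L * e - x ^ 2 / (2 * L)) = 2 * L * g + 2 * (x * e) - x ^ 2 := by
    field_simp
  linarith

lemma mul_le_of_le_two_mul_of_le_div {G x e ε : ℝ} (hG : 0 < G) (hx : x ≤ 2 * G)
    (he₀ : 0 ≤ e) (he : e ≤ ε ^ 2 / (16 * G)) :
    x * e ≤ ε ^ 2 / 8 :=
  calc x * e ≤ 2 * G * (ε ^ 2 / (16 * G)) := mul_le_mul hx he he₀ (by positivity)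
    _ = ε ^ 2 / 8 := by field_simp; ring

lemma sum_range_le_of_le_mul_sub_succ {a g : ℕ → ℝ} {c b m Δ : ℝ} (hc : 0 ≤ c)
    (hstep : ∀ t, a t ≤ c * (g t - g (t + 1)) + b) (hm : ∀ t, m ≤ g t) (h₀ : g 0 - m ≤ Δ)
    (T : ℕ) :
    ∑ t ∈ range T, a t ≤ c * Δ + T * b :=
  calc ∑ t ∈ range T, a t ≤ ∑ t ∈ range T, (c * (g t - g (t + 1)) + b) :=
        sum_le_sum fun t _ ↦ hstep t
    _ = c * (g 0 - g T) + T * b := by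
        rw [sum_add_distrib, ← mul_sum, sum_range_sub', sum_const, card_range, nsmul_eq_mul]
    _ ≤ c * Δ + T * b := by gcongr; linarith [hm T]

lemma exists_le_of_sum_sq_le {x : ℕ → ℝ} {T : ℕ} {r : ℝ} (hT : 0 < T) (hr : 0 ≤ r)
    (h : ∑ t ∈ range T, x t ^ 2 ≤ T * r ^ 2) :
    ∃ t < T, x t ≤ r := by
  have hsum : ∑ t ∈ range T, x t ^ 2 ≤ ∑ _t ∈ range T, r ^ 2 := by
    rwa [sum_const, card_range, nsmul_eq_mul]
  obtain ⟨t, ht, hle⟩ := exists_le_of_sum_le (nonempty_range_iff.mpr hT.ne') hsum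
  exact ⟨t, mem_range.mp ht, (abs_le_of_sq_le_sq' hle hr).2⟩

theorem frank_wolfe_telescoping_general (Lt gmax ε Δ ginf : ℝ)
    (hLt : 0 < Lt) (hgmax : 1 ≤ gmax) (hε : ε ∈ Set.Ioo (0:ℝ) 1)
    (gv X E : ℕ → ℝ)
    (hXub : ∀ t, X t ≤ 2 * gmax)
    (hEnn : ∀ t, 0 ≤ E t) (hEub : ∀ t, E t ≤ ε^2 / (16 * gmax))
    (hdesc : ∀ t, gv (t+1) ≤ gv t + (X t / Lt) * E t - (X t)^2 / (2 * Lt))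
    (hlb : ∀ t, ginf ≤ gv t) (hΔ0 : gv 0 - ginf ≤ Δ)
    (T : ℕ) (hT : 0 < T) :
    (1 / (T:ℝ)) * ∑ t ∈ Finset.range T, (X t)^2 ≤ 2 * Lt * Δ / (T:ℝ) + ε^2 / 4 ∧
    (8 * Lt * Δ / ε^2 ≤ (T:ℝ) → ∃ t < T, X t ≤ ε) := by
  have hstep : ∀ t, X t ^ 2 ≤ 2 * Lt * (gv t - gv (t + 1)) + ε ^ 2 / 4 := fun t ↦ by
    have := mul_le_of_le_two_mul_of_le_div (by linarith) (hXub t) (hEnn t) (hEub t)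
    linarith [sq_le_of_descent hLt (hdesc t)]
  have hsum : ∑ t ∈ range T, X t ^ 2 ≤ 2 * Lt * Δ + T * (ε ^ 2 / 4) :=
    sum_range_le_of_le_mul_sub_succ (by positivity) hstep hlb hΔ0 T
  have hTpos : (0 : ℝ) < T := by exact_mod_cast hT
  refine ⟨?_, fun hT8 ↦ exists_le_of_sum_sq_le hT hε.1.le ?_⟩
  · rw [one_div, inv_mul_le_iff₀ hTpos, mul_add, mul_div_cancel₀ _ hTpos.ne']
    exact hsum
  · have h8 : 8 * Lt * Δ ≤ T * ε ^ 2 := (div_le_iff₀ (pow_pos hε.1 2)).mp hT8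
    nlinarith

/-- Telescoping the Frank–Wolfe descent inequality: the average of X_t² is at most
    2L̃Δ/T + ε²/4, and if T ≥ 8L̃Δ/ε² then some X_t ≤ ε. -/
theorem frank_wolfe_telescoping (Lt gmax ε Δ ginf : ℝ)
    (hLt : 0 < Lt) (hgmax : 1 ≤ gmax) (hε : ε ∈ Set.Ioo (0:ℝ) 1) (hΔ : 0 ≤ Δ)
    (gv X E : ℕ → ℝ)
    (hXnn : ∀ t, 0 ≤ X t) (hXub : ∀ t, X t ≤ 2 * gmax)
    (hEnn : ∀ t, 0 ≤ E t) (hEub : ∀ t, E t ≤ ε^2 / (16 * gmax))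
    (hdesc : ∀ t, gv (t+1) ≤ gv t + (X t / Lt) * E t - (X t)^2 / (2 * Lt))
    (hlb : ∀ t, ginf ≤ gv t) (hΔ0 : gv 0 - ginf ≤ Δ)
    (T : ℕ) (hT : 0 < T) :
    (1 / (T:ℝ)) * ∑ t ∈ Finset.range T, (X t)^2 ≤ 2 * Lt * Δ / (T:ℝ) + ε^2 / 4 ∧
    (8 * Lt * Δ / ε^2 ≤ (T:ℝ) → ∃ t < T, X t ≤ ε) :=
  frank_wolfe_telescoping_general Lt gmax ε Δ ginf hLt hgmax hε gv X E hXub hEnn hEub hdesc hlb hΔ0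
    T hT
end

section
/- Suppose the sets Θ ⊆ ℝᵐ and A ⊆ ℝⁿ are nonempty, compact, and convex, and f : Θ × A → ℝ is continuously differentiable. Then there exists a point (θ̄, ᾱ) ∈ Θ × A that is a first-order Nash equilibrium of the min-max game min_{θ∈Θ} max_{α∈A} f(θ,α): ⟨∇_θ f(θ̄,ᾱ), θ−θ̄⟩ ≥ 0 for all θ ∈ Θ and ⟨∇_α f(θ̄,ᾱ), α−ᾱ⟩ ≤ 0 for all α ∈ A. -/
open scoped RealInnerProductSpace
open Metric Set MeasureTheory

section Proj

variable {E : Type*} [NormedAddCommGroup E] [InnerProductSpace ℝ E]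

theorem real_inner_self_pos' {x : E} (hx : x ≠ 0) : 0 < ⟪x, x⟫ := by
  rw [real_inner_self_eq_norm_sq]
  exact pow_pos (norm_pos_iff.2 hx) 2

theorem exists_proj_point {K : Set E} (hne : K.Nonempty) (hc : IsCompact K) (hv : Convex ℝ K)
    (x : E) : ∃ y ∈ K, ∀ z ∈ K, ⟪x - y, z - y⟫ ≤ 0 := by
  obtain ⟨y, hyK, hy⟩ := exists_norm_eq_iInf_of_complete_convex hne hc.isComplete hv x
  exact ⟨y, hyK, (norm_eq_iInf_iff_real_inner_le_zero hv hyK).1 hy⟩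

noncomputable def projPt {K : Set E} (hne : K.Nonempty) (hc : IsCompact K) (hv : Convex ℝ K)
    (x : E) : E := (exists_proj_point hne hc hv x).choose

theorem projPt_mem {K : Set E} (hne : K.Nonempty) (hc : IsCompact K) (hv : Convex ℝ K)
    (x : E) : projPt hne hc hv x ∈ K := (exists_proj_point hne hc hv x).choose_spec.1

theorem projPt_inner {K : Set E} (hne : K.Nonempty) (hc : IsCompact K) (hv : Convex ℝ K)
    (x : E) : ∀ z ∈ K, ⟪x - projPt hne hc hv x, z - projPt hne hc hv x⟫ ≤ 0 :=
  (exists_proj_point hne hc hv x).choose_spec.2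

theorem projPt_eq_self {K : Set E} (hne : K.Nonempty) (hc : IsCompact K) (hv : Convex ℝ K)
    {x : E} (hx : x ∈ K) : projPt hne hc hv x = x := by
  have h := projPt_inner hne hc hv x x hx
  have h2 : ‖x - projPt hne hc hv x‖ ^ 2 ≤ 0 := by
    rwa [← real_inner_self_eq_norm_sq]
  have h3 : ‖x - projPt hne hc hv x‖ = 0 := by nlinarith [norm_nonneg (x - projPt hne hc hv x)]
  have := norm_eq_zero.mp h3
  rw [sub_eq_zero] at this
  exact this.symm

theorem projPt_continuous {K : Set E} (hne : K.Nonempty) (hc : IsCompact K) (hv : Convex ℝ K) :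
    Continuous (projPt hne hc hv) := by
  set P := projPt hne hc hv with hP
  have key : ∀ x y, ‖P x - P y‖ ≤ ‖x - y‖ := by
    intro x y
    have h1 := projPt_inner hne hc hv x (P y) (projPt_mem hne hc hv y)
    have h2 := projPt_inner hne hc hv y (P x) (projPt_mem hne hc hv x)
    have expand : ⟪x - y, P x - P y⟫ =
        (-⟪x - P x, P y - P x⟫) + ‖P x - P y‖ ^ 2 + (-⟪y - P y, P x - P y⟫) := by
      have e1 : x - y = (x - P x) + (P x - P y) + (P y - y) := by abel
      rw [e1, inner_add_left, inner_add_left, ← real_inner_self_eq_norm_sq]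
      have e2 : ⟪x - P x, P x - P y⟫ = -⟪x - P x, P y - P x⟫ := by
        rw [← inner_neg_right]; congr 1; abel
      have e3 : ⟪P y - y, P x - P y⟫ = -⟪y - P y, P x - P y⟫ := by
        rw [← inner_neg_left]; congr 1; abel
      rw [e2, e3]
    have hle : ‖P x - P y‖ ^ 2 ≤ ⟪x - y, P x - P y⟫ := by
      rw [expand]; linarith
    have hcs : ⟪x - y, P x - P y⟫ ≤ ‖x - y‖ * ‖P x - P y‖ := real_inner_le_norm _ _
    rcases eq_or_ne (‖P x - P y‖) 0 with h0 | h0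
    · rw [h0]; exact norm_nonneg _
    · have hpos : 0 < ‖P x - P y‖ := (norm_nonneg _).lt_of_ne (Ne.symm h0)
      nlinarith
  have : LipschitzWith 1 P := by
    refine LipschitzWith.of_dist_le_mul fun x y => ?_
    rw [dist_eq_norm, dist_eq_norm, NNReal.coe_one, one_mul]
    exact key x y
  exact this.continuous

end Proj

section NoRetraction

variable {N : ℕ}

local notation "E'" => EuclideanSpace ℝ (Fin N)

/-- Expansion of `det (1 + t • A)` as a polynomial in `t`. -/
theorem det_one_add_smul_expand (t : ℝ) (A : Matrix (Fin N) (Fin N) ℝ) :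
    (1 + t • A).det = ∑ S : Finset (Fin N),
      t ^ S.card * Matrix.det (Matrix.of fun i j =>
        if i ∈ S then A i j else if i = j then (1 : ℝ) else 0) := by
  have h := (Matrix.detRowAlternating :
      (Fin N → ℝ) [⋀^Fin N]→ₗ[ℝ] ℝ).toMultilinearMap.map_add_univ
      (fun i => t • A i) (fun i => (1 : Matrix (Fin N) (Fin N) ℝ) i)
  have e : ((fun i => t • A i) + fun i => (1 : Matrix (Fin N) (Fin N) ℝ) i)
      = (1 + t • A : Matrix (Fin N) (Fin N) ℝ) := by
    funext i j
    show t • A i j + (1 : Matrix (Fin N) (Fin N) ℝ) i j = (1 + t • A) i j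
    simp only [Matrix.add_apply, Matrix.smul_apply, smul_eq_mul]
    ring
  rw [e] at h
  have hdet : (1 + t • A).det = Matrix.detRowAlternating (1 + t • A) := rfl
  refine hdet.trans (h.trans (Finset.sum_congr rfl fun S _ => ?_))
  set m0 : Fin N → Fin N → ℝ :=
    S.piecewise (fun i => A i) (fun i => (1 : Matrix (Fin N) (Fin N) ℝ) i) with hm0
  have e1 : (S.piecewise (fun i => t • A i) fun i => (1 : Matrix (Fin N) (Fin N) ℝ) i)
      = S.piecewise (fun i => (fun _ : Fin N => t) i • m0 i) m0 := by
    funext i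
    by_cases hi : i ∈ S
    · simp [Finset.piecewise_eq_of_mem _ _ _ hi, hm0]
    · simp [Finset.piecewise_eq_of_notMem _ _ _ hi, hm0]
  rw [e1, (Matrix.detRowAlternating :
      (Fin N → ℝ) [⋀^Fin N]→ₗ[ℝ] ℝ).toMultilinearMap.map_piecewise_smul
      (fun _ : Fin N => t) m0 S, Finset.prod_const, smul_eq_mul]
  simp only [AlternatingMap.coe_multilinearMap, hm0]
  congr 1
  have hmm : (S.piecewise (fun i => A i) fun i => (1 : Matrix (Fin N) (Fin N) ℝ) i)
      = (Matrix.of fun i j => if i ∈ S then A i j else if i = j then (1 : ℝ) else 0) := by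
    funext i j
    by_cases hi : i ∈ S <;> simp [Finset.piecewise, hi, Matrix.one_apply]
  rw [hmm]
  rfl

set_option maxHeartbeats 2000000 in
theorem no_retraction (U : Set (EuclideanSpace ℝ (Fin N))) (hU : IsOpen U)
    (hBU : closedBall (0 : EuclideanSpace ℝ (Fin N)) 1 ⊆ U)
    (g : EuclideanSpace ℝ (Fin N) → EuclideanSpace ℝ (Fin N)) (hg : ContDiffOn ℝ (⊤ : ℕ∞) g U)
    (hsph : ∀ x ∈ U, ‖g x‖ = 1) (hbd : ∀ x : EuclideanSpace ℝ (Fin N), ‖x‖ = 1 → g x = x) :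
    False := by
  classical
  set B : Set (EuclideanSpace ℝ (Fin N)) := closedBall 0 1 with hBdef
  have hBc : IsCompact B := isCompact_closedBall _ _
  have hBmeas : MeasurableSet B := measurableSet_closedBall
  have hBconv : Convex ℝ B := convex_closedBall _ _
  have hgdiff : ∀ x ∈ U, HasFDerivAt g (fderiv ℝ g x) x := fun x hx =>
    ((hg.contDiffAt (hU.mem_nhds hx)).differentiableAt (by simp)).hasFDerivAt
  have hg' : ContinuousOn (fderiv ℝ g) U := hg.continuousOn_fderiv_of_isOpen hU (mod_cast le_top)
  have hgc : ContinuousOn g U := hg.continuousOn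
  -- Step 1 : the determinant of the derivative of `g` vanishes on `U`
  have hdet0 : ∀ x ∈ U, (fderiv ℝ g x).det = 0 := by
    intro x hx
    by_contra hdet
    have hinner : HasFDerivAt (fun y => ⟪g y, g y⟫)
        ((fderivInnerCLM ℝ (g x, g x)).comp ((fderiv ℝ g x).prod (fderiv ℝ g x))) x :=
      (hgdiff x hx).inner ℝ (hgdiff x hx)
    have hconst : (fun y => ⟪g y, g y⟫) =ᶠ[nhds x] fun _ => (1 : ℝ) := by
      filter_upwards [hU.mem_nhds hx] with y hy
      rw [real_inner_self_eq_norm_sq, hsph y hy, one_pow]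
    have hzero : HasFDerivAt (fun y => ⟪g y, g y⟫)
        (0 : EuclideanSpace ℝ (Fin N) →L[ℝ] ℝ) x :=
      (hasFDerivAt_const (1 : ℝ) x).congr_of_eventuallyEq hconst
    have huniq := hzero.unique hinner
    set v := ((fderiv ℝ g x).toContinuousLinearEquivOfDetNeZero hdet).symm (g x) with hv
    have hev : fderiv ℝ g x v = g x := by
      have h := ((fderiv ℝ g x).toContinuousLinearEquivOfDetNeZero hdet).apply_symm_apply (g x)
      rwa [ContinuousLinearMap.toContinuousLinearEquivOfDetNeZero_apply] at h
    have heval := DFunLike.congr_fun huniq v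
    simp only [ContinuousLinearMap.zero_apply, ContinuousLinearMap.comp_apply,
      ContinuousLinearMap.prod_apply, fderivInnerCLM_apply, hev] at heval
    have h1 : ‖g x‖ = 1 := hsph x hx
    rw [real_inner_self_eq_norm_sq, h1] at heval
    norm_num at heval
  -- Step 2 : Lipschitz-type bound for `g` on `B`
  obtain ⟨C, hC⟩ := hBc.exists_bound_of_continuousOn (hg'.mono hBU)
  set L : ℝ := max C 0 + 2 with hL
  have hLpos : 0 < L := by
    have := le_max_right C 0
    rw [hL]; linarith
  have hgl : ∀ x ∈ B, ∀ y ∈ B, ‖g y - g x‖ ≤ max C 0 * ‖y - x‖ := by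
    intro x hx y hy
    exact hBconv.norm_image_sub_le_of_norm_hasFDerivWithin_le
      (fun z hz => (hgdiff z (hBU hz)).hasFDerivWithinAt)
      (fun z hz => le_trans (hC z hz) (le_max_left _ _)) hx hy
  -- the homotopy maps and their derivatives
  set W : EuclideanSpace ℝ (Fin N) →
      (EuclideanSpace ℝ (Fin N) →L[ℝ] EuclideanSpace ℝ (Fin N)) :=
    fun x => fderiv ℝ g x - ContinuousLinearMap.id ℝ _ with hW
  have hWc : ContinuousOn W U := hg'.sub continuousOn_const
  set F : ℝ → EuclideanSpace ℝ (Fin N) → EuclideanSpace ℝ (Fin N) :=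
    fun t x => x + t • (g x - x) with hF
  set DF : ℝ → EuclideanSpace ℝ (Fin N) →
      (EuclideanSpace ℝ (Fin N) →L[ℝ] EuclideanSpace ℝ (Fin N)) :=
    fun t x => ContinuousLinearMap.id ℝ _ + t • W x with hDF
  have hFdiff : ∀ (t : ℝ), ∀ x ∈ U, HasFDerivAt (F t) (DF t x) x := by
    intro t x hx
    have h1 : HasFDerivAt (fun y => g y - y) (W x) x := (hgdiff x hx).sub (hasFDerivAt_id x)
    exact (hasFDerivAt_id x).add (h1.const_smul t)
  have hFcont : ∀ t : ℝ, ContinuousOn (F t) U := fun t =>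
    continuousOn_id.add ((hgc.sub continuousOn_id).const_smul t)
  -- matrix representation of the derivatives
  set bas : Module.Basis (Fin N) ℝ (EuclideanSpace ℝ (Fin N)) :=
    (EuclideanSpace.basisFun (Fin N) ℝ).toBasis with hbas
  set MatW : EuclideanSpace ℝ (Fin N) → Matrix (Fin N) (Fin N) ℝ :=
    fun x => LinearMap.toMatrix bas bas (W x :
      EuclideanSpace ℝ (Fin N) →ₗ[ℝ] EuclideanSpace ℝ (Fin N)) with hMatW
  have hdetDF : ∀ (t : ℝ) (x : EuclideanSpace ℝ (Fin N)),
      (DF t x).det = (1 + t • MatW x).det := by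
    intro t x
    show LinearMap.det ((DF t x : EuclideanSpace ℝ (Fin N) →ₗ[ℝ] EuclideanSpace ℝ (Fin N))) = _
    rw [← LinearMap.det_toMatrix bas]
    congr 1
    have hcoe : ((DF t x : EuclideanSpace ℝ (Fin N) →L[ℝ] EuclideanSpace ℝ (Fin N)) :
        EuclideanSpace ℝ (Fin N) →ₗ[ℝ] EuclideanSpace ℝ (Fin N))
        = LinearMap.id + t • (W x : EuclideanSpace ℝ (Fin N) →ₗ[ℝ] EuclideanSpace ℝ (Fin N)) := by
      simp [hDF]
    rw [hcoe, map_add, _root_.map_smul, LinearMap.toMatrix_id]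
  have hMatWc : ContinuousOn MatW U := by
    apply continuousOn_pi.2
    intro i
    rw [continuousOn_pi]
    intro j
    have hentry : ∀ x, MatW x i j = W x (bas j) i := by
      intro x
      show (LinearMap.toMatrix bas bas (W x :
        EuclideanSpace ℝ (Fin N) →ₗ[ℝ] EuclideanSpace ℝ (Fin N))) i j = _
      rw [LinearMap.toMatrix_apply, hbas, OrthonormalBasis.coe_toBasis_repr_apply,
        EuclideanSpace.basisFun_repr]
      rfl
    simp only [hentry]
    exact (EuclideanSpace.proj i).continuous.comp_continuousOn
      ((ContinuousLinearMap.apply ℝ _ (bas j)).continuous.comp_continuousOn hWc)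
  -- joint continuity of the determinant integrand
  set Dfun : ℝ × EuclideanSpace ℝ (Fin N) → ℝ := fun p => (1 + p.1 • MatW p.2).det with hDfun
  have hDfunc : ContinuousOn Dfun ((Icc (0:ℝ) 1) ×ˢ B) := by
    have hm : ContinuousOn (fun p : ℝ × EuclideanSpace ℝ (Fin N) => 1 + p.1 • MatW p.2)
        ((Icc (0:ℝ) 1) ×ˢ B) := by
      have h2 : ContinuousOn (fun p : ℝ × EuclideanSpace ℝ (Fin N) => MatW p.2)
          ((Icc (0:ℝ) 1) ×ˢ B) :=
        hMatWc.comp continuous_snd.continuousOn (fun p hp => hBU hp.2)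
      exact continuousOn_const.add (continuous_fst.continuousOn.smul h2)
    exact (Continuous.matrix_det continuous_id).comp_continuousOn hm
  -- uniform positivity of the determinant for small `t`
  have hposdet : ∃ τ₀ > (0:ℝ), ∀ t ∈ Icc (0:ℝ) τ₀, ∀ x ∈ B, (1/2 : ℝ) < Dfun (t, x) := by
    have huc := (isCompact_Icc.prod hBc).uniformContinuousOn_of_continuous hDfunc
    rw [Metric.uniformContinuousOn_iff] at huc
    obtain ⟨δ, hδpos, hδ⟩ := huc (1/2) (by norm_num)
    refine ⟨min (δ/2) 1, by positivity, ?_⟩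
    intro t ht x hx
    have htnn : 0 ≤ t := ht.1
    have ht1 : t ≤ 1 := le_trans ht.2 (min_le_right _ _)
    have h0mem : ((0:ℝ), x) ∈ (Icc (0:ℝ) 1) ×ˢ B := ⟨⟨le_refl 0, zero_le_one⟩, hx⟩
    have htmem : (t, x) ∈ (Icc (0:ℝ) 1) ×ˢ B := ⟨⟨htnn, ht1⟩, hx⟩
    have hdist : dist (t, x) ((0:ℝ), x) < δ := by
      rw [Prod.dist_eq]
      have h1 : dist t (0:ℝ) < δ := by
        rw [Real.dist_eq, sub_zero, abs_of_nonneg htnn]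
        calc t ≤ min (δ/2) 1 := ht.2
          _ ≤ δ/2 := min_le_left _ _
          _ < δ := by linarith
      have h2 : dist x x = 0 := dist_self x
      rw [max_lt_iff]
      exact ⟨h1, by rw [h2]; exact hδpos⟩
    have hres := hδ (t, x) htmem ((0:ℝ), x) h0mem hdist
    have hD0 : Dfun ((0:ℝ), x) = 1 := by
      simp [hDfun]
    rw [Real.dist_eq, hD0] at hres
    have := abs_lt.1 hres
    linarith [this.1]
  obtain ⟨τ₀, hτ₀pos, hτ₀⟩ := hposdet
  set τ : ℝ := min τ₀ (min (1/(2*L)) (1/2)) with hτ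
  have hτpos : 0 < τ := lt_min hτ₀pos (lt_min (by positivity) (by norm_num))
  have hτle1 : τ ≤ 1/2 := le_trans (min_le_right _ _) (min_le_right _ _)
  have hτleL : τ ≤ 1/(2*L) := le_trans (min_le_right _ _) (min_le_left _ _)
  have hτleτ₀ : τ ≤ τ₀ := min_le_left _ _
  -- `F t` maps `B` to `B`
  have hmapsto : ∀ t ∈ Icc (0:ℝ) 1, MapsTo (F t) B B := by
    intro t ht x hx
    have hgB : g x ∈ B := by
      rw [hBdef, mem_closedBall_zero_iff, hsph x (hBU hx)]
    have hcm := hBconv hx hgB (by linarith [ht.2] : (0:ℝ) ≤ 1 - t) ht.1 (by ring)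
    have he : F t x = (1 - t) • x + t • g x := by
      simp only [hF]
      rw [smul_sub, sub_smul, one_smul]
      abel
    rw [he]
    exact hcm
  -- `F t` fixes the boundary sphere
  have hbfix : ∀ (t : ℝ), ∀ x : EuclideanSpace ℝ (Fin N), ‖x‖ = 1 → F t x = x := by
    intro t x hx
    simp only [hF, hbd x hx, sub_self, smul_zero, add_zero]
  -- `F t` is injective on `B` for small `t`
  have hinj : ∀ t ∈ Icc (0:ℝ) τ, InjOn (F t) B := by
    intro t ht x hx y hy hxy
    have h0 : x + t • (g x - x) - (y + t • (g y - y)) = 0 := by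
      apply sub_eq_zero.2
      exact hxy
    have h1 : x - y = t • ((g y - y) - (g x - x)) := by
      calc x - y = (x + t • (g x - x) - (y + t • (g y - y)))
            + (t • (g y - y) - t • (g x - x)) := by abel
        _ = t • (g y - y) - t • (g x - x) := by rw [h0, zero_add]
        _ = t • ((g y - y) - (g x - x)) := (smul_sub t _ _).symm
    have h2 : ‖(g y - y) - (g x - x)‖ ≤ (max C 0 + 1) * ‖x - y‖ := by
      have he : (g y - y) - (g x - x) = (g y - g x) + (x - y) := by abel
      rw [he]
      calc ‖(g y - g x) + (x - y)‖ ≤ ‖g y - g x‖ + ‖x - y‖ := norm_add_le _ _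
        _ ≤ max C 0 * ‖y - x‖ + ‖x - y‖ := by linarith [hgl x hx y hy]
        _ = (max C 0 + 1) * ‖x - y‖ := by rw [norm_sub_rev y x]; ring
    have h3 : ‖x - y‖ ≤ t * ((max C 0 + 1) * ‖x - y‖) := by
      calc ‖x - y‖ = ‖t • ((g y - y) - (g x - x))‖ := by rw [h1]
        _ = |t| * ‖(g y - y) - (g x - x)‖ := by rw [norm_smul, Real.norm_eq_abs]
        _ = t * ‖(g y - y) - (g x - x)‖ := by rw [abs_of_nonneg ht.1]
        _ ≤ t * ((max C 0 + 1) * ‖x - y‖) :=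
            mul_le_mul_of_nonneg_left h2 ht.1
    have hLt : t * (max C 0 + 1) ≤ 1/2 := by
      have htL : t ≤ 1/(2*L) := le_trans ht.2 hτleL
      have hMC : max C 0 + 1 ≤ L := by rw [hL]; linarith
      have h2L : (0:ℝ) < 2 * L := by linarith
      calc t * (max C 0 + 1) ≤ (1/(2*L)) * L := by
            apply mul_le_mul htL hMC (by positivity) (by positivity)
        _ = 1/2 := by field_simp
    have h4 : ‖x - y‖ ≤ (1/2) * ‖x - y‖ := by
      calc ‖x - y‖ ≤ t * (max C 0 + 1) * ‖x - y‖ := by linarith [h3, mul_assoc t (max C 0 + 1) ‖x - y‖]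
        _ ≤ (1/2) * ‖x - y‖ := mul_le_mul_of_nonneg_right hLt (norm_nonneg _)
    have h5 : ‖x - y‖ ≤ 0 := by linarith
    have := norm_le_zero_iff.1 h5
    exact sub_eq_zero.1 this
  -- surjectivity of `F t` onto `B` for small `t`
  have hsurj : ∀ t ∈ Icc (0:ℝ) τ, B ⊆ F t '' B := by
    intro t ht
    set Kt := F t '' B with hKt
    have hKtc : IsCompact Kt := hBc.image_of_continuousOn ((hFcont t).mono hBU)
    set O := ball (0 : EuclideanSpace ℝ (Fin N)) 1 with hO
    have hOB : O ⊆ B := ball_subset_closedBall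
    have h0B : (0 : EuclideanSpace ℝ (Fin N)) ∈ B := mem_closedBall_self zero_le_one
    have hT1 : F t 0 ∈ Kt ∩ O := by
      constructor
      · exact mem_image_of_mem _ h0B
      · have heq : F t 0 = t • g 0 := by simp [hF]
        rw [hO, mem_ball_zero_iff, heq, norm_smul, Real.norm_of_nonneg ht.1,
          hsph 0 (hBU h0B), mul_one]
        calc t ≤ τ := ht.2
          _ ≤ 1/2 := hτle1
          _ < 1 := by norm_num
    have hopen : IsOpen (Kt ∩ O) := by
      rw [isOpen_iff_mem_nhds]
      rintro y ⟨⟨x, hxB, rfl⟩, hyO⟩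
      have hxO : x ∈ O := by
        by_contra hxO
        have hx1 : ‖x‖ = 1 := by
          have ha : ‖x‖ ≤ 1 := mem_closedBall_zero_iff.1 hxB
          have hb2 : ¬ ‖x‖ < 1 := by rwa [hO, mem_ball_zero_iff] at hxO
          linarith [not_lt.1 hb2]
        have hfx : F t x = x := hbfix t x hx1
        rw [hfx, hO, mem_ball_zero_iff, hx1] at hyO
        exact lt_irrefl _ hyO
      have hxU : x ∈ U := hBU (hOB hxO)
      have hdetpos : (0:ℝ) < (DF t x).det := by
        rw [hdetDF]
        have h := hτ₀ t ⟨ht.1, le_trans ht.2 hτleτ₀⟩ x hxB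
        simpa [hDfun] using lt_trans (by norm_num : (0:ℝ) < 1/2) h
      have hdetne : (DF t x).det ≠ 0 := ne_of_gt hdetpos
      have hstrict : HasStrictFDerivAt (F t) (DF t x) x := by
        have hca : ContDiffAt ℝ (⊤ : ℕ∞) (F t) x := by
          have hqa := hg.contDiffAt (hU.mem_nhds hxU)
          exact contDiffAt_id.add ((hqa.sub contDiffAt_id).const_smul t)
        exact hca.hasStrictFDerivAt' (hFdiff t x hxU) (by simp)
      have hse : HasStrictFDerivAt (F t)
          (((DF t x).toContinuousLinearEquivOfDetNeZero hdetne :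
            EuclideanSpace ℝ (Fin N) ≃L[ℝ] EuclideanSpace ℝ (Fin N)) :
            EuclideanSpace ℝ (Fin N) →L[ℝ] EuclideanSpace ℝ (Fin N)) x := by
        rwa [ContinuousLinearMap.coe_toContinuousLinearEquivOfDetNeZero]
      have hmapnhds := hse.map_nhds_eq_of_equiv
      have hOnhds : O ∈ nhds x := isOpen_ball.mem_nhds hxO
      have himg : F t '' O ∈ nhds (F t x) := by
        rw [← hmapnhds]
        exact Filter.image_mem_map hOnhds
      have hsubset : F t '' O ∩ O ⊆ Kt ∩ O :=
        inter_subset_inter (image_mono hOB) (subset_refl O)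
      exact Filter.mem_of_superset (Filter.inter_mem himg (isOpen_ball.mem_nhds hyO)) hsubset
    have hpre : IsPreconnected O := (convex_ball _ _).isPreconnected
    have hOsub : O ⊆ Kt := by
      by_contra hns
      rw [not_subset] at hns
      obtain ⟨z, hzO, hzK⟩ := hns
      have hcover : O ⊆ (Kt ∩ O) ∪ Ktᶜ := by
        intro w hw
        by_cases hwK : w ∈ Kt
        · exact Or.inl ⟨hwK, hw⟩
        · exact Or.inr hwK
      have hne1 : (O ∩ (Kt ∩ O)).Nonempty := ⟨F t 0, hT1.2, hT1⟩
      have hne2 : (O ∩ Ktᶜ).Nonempty := ⟨z, hzO, hzK⟩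
      obtain ⟨w, _, ⟨hwK, _⟩, hwKc⟩ :=
        hpre (Kt ∩ O) Ktᶜ hopen hKtc.isClosed.isOpen_compl hcover hne1 hne2
      exact hwKc hwK
    intro y hyB
    have hcl : closure O = B := by
      rw [hO, hBdef]
      exact closure_ball 0 one_ne_zero
    have hy1 : y ∈ closure O := by rw [hcl]; exact hyB
    have hy2 : y ∈ closure Kt := closure_mono hOsub hy1
    rwa [hKtc.isClosed.closure_eq] at hy2
  have himg_eq : ∀ t ∈ Icc (0:ℝ) τ, F t '' B = B := by
    intro t ht
    apply Subset.antisymm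
    · rw [image_subset_iff]
      intro x hx
      exact hmapsto t ⟨ht.1, le_trans ht.2 (by linarith [hτle1])⟩ hx
    · exact hsurj t ht
  -- integrand coefficients
  set c : Finset (Fin N) → ℝ := fun S => ∫ x in B, (Matrix.of fun i j =>
      if i ∈ S then MatW x i j else if i = j then (1:ℝ) else 0).det ∂volume with hc
  have hScont : ∀ S : Finset (Fin N), ContinuousOn (fun x => (Matrix.of fun i j =>
      if i ∈ S then MatW x i j else if i = j then (1:ℝ) else 0).det) B := by
    intro S
    apply (Continuous.matrix_det continuous_id).comp_continuousOn
    apply continuousOn_pi.2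
    intro i
    rw [continuousOn_pi]
    intro j
    by_cases hiS : i ∈ S
    · simp only [Matrix.of_apply, if_pos hiS]
      exact (continuous_apply j).comp_continuousOn
        ((continuous_apply i).comp_continuousOn (hMatWc.mono hBU))
    · simp only [Matrix.of_apply, if_neg hiS]
      exact continuousOn_const
  have hSintegrable : ∀ S : Finset (Fin N), IntegrableOn (fun x => (Matrix.of fun i j =>
      if i ∈ S then MatW x i j else if i = j then (1:ℝ) else 0).det) B volume :=
    fun S => (hScont S).integrableOn_compact hBc
  have hintegral : ∀ t : ℝ, ∫ x in B, (DF t x).det ∂volume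
      = ∑ S : Finset (Fin N), t ^ S.card * c S := by
    intro t
    have hpt : ∀ x, (DF t x).det = ∑ S : Finset (Fin N), t ^ S.card * (Matrix.of fun i j =>
        if i ∈ S then MatW x i j else if i = j then (1:ℝ) else 0).det := by
      intro x
      rw [hdetDF, det_one_add_smul_expand]
    rw [setIntegral_congr_fun hBmeas (fun x _ => hpt x), integral_finset_sum]
    · refine Finset.sum_congr rfl fun S _ => ?_
      rw [integral_const_mul]
    · intro S _
      exact ((hSintegrable S).const_mul _)
  -- change of variables for small `t`
  have hvol : ∀ t ∈ Icc (0:ℝ) τ, (volume B).toReal = ∫ x in B, (DF t x).det ∂volume := by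
    intro t ht
    have hderivW : ∀ x ∈ B, HasFDerivWithinAt (F t) (DF t x) B x :=
      fun x hx => (hFdiff t x (hBU hx)).hasFDerivWithinAt
    have hCOV := lintegral_abs_det_fderiv_eq_addHaar_image volume hBmeas hderivW (hinj t ht)
    rw [himg_eq t ht] at hCOV
    have hdetposB : ∀ x ∈ B, 0 < (DF t x).det := by
      intro x hx
      rw [hdetDF]
      have h := hτ₀ t ⟨ht.1, le_trans ht.2 hτleτ₀⟩ x hx
      simpa [hDfun] using lt_trans (by norm_num : (0:ℝ) < 1/2) h
    have hint : IntegrableOn (fun x => (DF t x).det) B volume := by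
      apply ContinuousOn.integrableOn_compact hBc
      have hcont1 : ContinuousOn (fun x => (1 + t • MatW x).det) B :=
        (Continuous.matrix_det continuous_id).comp_continuousOn
          (continuousOn_const.add ((hMatWc.mono hBU).const_smul t))
      exact hcont1.congr (fun x _ => hdetDF t x)
    have habs : (∫⁻ x in B, ENNReal.ofReal |(DF t x).det| ∂volume)
        = ∫⁻ x in B, ENNReal.ofReal ((DF t x).det) ∂volume := by
      apply setLIntegral_congr_fun hBmeas
      exact (fun x hx => by rw [abs_of_pos (hdetposB x hx)])
    have hOfReal : ENNReal.ofReal (∫ x in B, (DF t x).det ∂volume)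
        = ∫⁻ x in B, ENNReal.ofReal ((DF t x).det) ∂volume := by
      apply ofReal_integral_eq_lintegral_ofReal hint
      exact (ae_restrict_iff' hBmeas).2 (ae_of_all _ fun x hx => (hdetposB x hx).le)
    have hfinal : volume B = ENNReal.ofReal (∫ x in B, (DF t x).det ∂volume) := by
      rw [hOfReal, ← habs, hCOV]
    rw [hfinal, ENNReal.toReal_ofReal]
    exact setIntegral_nonneg hBmeas fun x hx => (hdetposB x hx).le
  -- the polynomial argument
  set Q : Polynomial ℝ := (∑ S : Finset (Fin N),
      Polynomial.C (c S) * Polynomial.X ^ S.card) - Polynomial.C ((volume B).toReal) with hQ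
  have hQeval : ∀ t : ℝ, Q.eval t
      = (∑ S : Finset (Fin N), t ^ S.card * c S) - (volume B).toReal := by
    intro t
    rw [hQ, Polynomial.eval_sub, Polynomial.eval_finset_sum, Polynomial.eval_C]
    congr 1
    refine Finset.sum_congr rfl fun S _ => ?_
    rw [Polynomial.eval_mul, Polynomial.eval_C, Polynomial.eval_pow, Polynomial.eval_X, mul_comm]
  have hQroots : ∀ t ∈ Icc (0:ℝ) τ, Q.IsRoot t := by
    intro t ht
    show Q.eval t = 0
    rw [hQeval, ← hintegral t, ← hvol t ht, sub_self]
  have hQzero : Q = 0 := by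
    apply Polynomial.eq_zero_of_infinite_isRoot
    exact Set.Infinite.mono (fun t ht => hQroots t ht) (Set.Icc_infinite hτpos)
  have hQ1 : Q.eval 1 = 0 := by rw [hQzero]; simp
  -- evaluating the polynomial at `t = 1`
  have hDF1 : ∀ x : EuclideanSpace ℝ (Fin N), DF 1 x = fderiv ℝ g x := by
    intro x
    show ContinuousLinearMap.id ℝ _ + (1:ℝ) • W x = fderiv ℝ g x
    rw [one_smul]
    simp only [hW]
    abel
  have hint1 : ∫ x in B, (DF 1 x).det ∂volume = 0 := by
    have hzero : ∀ x ∈ B, (DF 1 x).det = (0:ℝ) := by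
      intro x hx
      rw [hDF1]
      exact hdet0 x (hBU hx)
    rw [setIntegral_congr_fun hBmeas hzero]
    simp
  have hsum1 : (∑ S : Finset (Fin N), (1:ℝ) ^ S.card * c S) = 0 := by
    rw [← hintegral 1]
    exact hint1
  have hvolpos : 0 < (volume B).toReal := by
    apply ENNReal.toReal_pos
    · exact (measure_closedBall_pos volume 0 one_pos).ne'
    · exact measure_closedBall_lt_top.ne
  rw [hQeval 1, hsum1] at hQ1
  linarith

theorem brouwer_smooth (q : EuclideanSpace ℝ (Fin N) → EuclideanSpace ℝ (Fin N))
    (hq : ContDiff ℝ (⊤ : ℕ∞) q) (hmap : MapsTo q (closedBall 0 1) (closedBall 0 1)) :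
    ∃ x ∈ closedBall (0 : EuclideanSpace ℝ (Fin N)) 1, q x = x := by
  by_contra hcon
  push_neg at hcon
  set d : EuclideanSpace ℝ (Fin N) → EuclideanSpace ℝ (Fin N) := fun x => x - q x with hd
  have hdC : ContDiff ℝ (⊤ : ℕ∞) d := contDiff_id.sub hq
  set b : EuclideanSpace ℝ (Fin N) → ℝ := fun x => ⟪x, d x⟫ with hb
  have hbC : ContDiff ℝ (⊤ : ℕ∞) b := contDiff_id.inner ℝ hdC
  set nsq : EuclideanSpace ℝ (Fin N) → ℝ := fun x => ⟪d x, d x⟫ with hnsq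
  have hnsqC : ContDiff ℝ (⊤ : ℕ∞) nsq := hdC.inner ℝ hdC
  set disc : EuclideanSpace ℝ (Fin N) → ℝ := fun x => b x ^ 2 + nsq x * (1 - ⟪x, x⟫)
    with hdisc
  have hdiscC : ContDiff ℝ (⊤ : ℕ∞) disc := by
    have h1 : ContDiff ℝ (⊤ : ℕ∞) (fun x : EuclideanSpace ℝ (Fin N) => ⟪x, x⟫) :=
      contDiff_id.inner ℝ contDiff_id
    exact (hbC.pow 2).add (hnsqC.mul (contDiff_const.sub h1))
  have hdne : ∀ x ∈ closedBall (0 : EuclideanSpace ℝ (Fin N)) 1, d x ≠ 0 :=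
    fun x hx => sub_ne_zero.2 fun h => hcon x hx h.symm
  have hbpos : ∀ x : EuclideanSpace ℝ (Fin N), ‖x‖ = 1 → 0 < b x := by
    intro x hx1
    have hxB : x ∈ closedBall (0 : EuclideanSpace ℝ (Fin N)) 1 := by
      rw [mem_closedBall_zero_iff, hx1]
    have hdx := hdne x hxB
    have hxx : ⟪x, x⟫ = (1 : ℝ) := by
      rw [real_inner_self_eq_norm_sq, hx1]; norm_num
    have hexp : b x = ⟪x, x⟫ - ⟪x, q x⟫ := by
      simp only [hb, hd]
      exact inner_sub_right _ _ _
    have hq1 : ‖q x‖ ≤ 1 := mem_closedBall_zero_iff.1 (hmap hxB)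
    have hqq : ⟪q x, q x⟫ ≤ 1 := by
      rw [real_inner_self_eq_norm_sq]; nlinarith [norm_nonneg (q x)]
    have hdd : (0 : ℝ) < ⟪d x, d x⟫ := real_inner_self_pos' hdx
    have hexpand : ⟪d x, d x⟫ = ⟪x, x⟫ - 2 * ⟪x, q x⟫ + ⟪q x, q x⟫ := by
      simp only [hd]
      exact real_inner_sub_sub_self _ _
    nlinarith
  set U : Set (EuclideanSpace ℝ (Fin N)) := {x | 0 < disc x ∧ d x ≠ 0} with hU
  have hUopen : IsOpen U := by
    have h1 : IsOpen {x : EuclideanSpace ℝ (Fin N) | 0 < disc x} :=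
      isOpen_lt continuous_const hdiscC.continuous
    have h2 : IsOpen {x : EuclideanSpace ℝ (Fin N) | d x ≠ 0} := by
      have : {x : EuclideanSpace ℝ (Fin N) | d x ≠ 0} = d ⁻¹' ({0}ᶜ) := rfl
      rw [this]
      exact isOpen_compl_singleton.preimage hdC.continuous
    exact h1.inter h2
  have hBU : closedBall (0 : EuclideanSpace ℝ (Fin N)) 1 ⊆ U := by
    intro x hx
    have hdx := hdne x hx
    refine ⟨?_, hdx⟩
    have hnormx : ‖x‖ ≤ 1 := mem_closedBall_zero_iff.1 hx
    have hxx : ⟪x, x⟫ ≤ (1 : ℝ) := by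
      rw [real_inner_self_eq_norm_sq]; nlinarith [norm_nonneg x]
    rcases lt_or_eq_of_le hxx with hlt | heq
    · have h1 : 0 < nsq x := real_inner_self_pos' hdx
      have h2 : (0 : ℝ) ≤ b x ^ 2 := sq_nonneg _
      show 0 < disc x
      simp only [hdisc]
      nlinarith
    · have hn1 : ‖x‖ = 1 := by
        rw [real_inner_self_eq_norm_sq] at heq
        nlinarith [norm_nonneg x]
      have hb0 := hbpos x hn1
      show 0 < disc x
      simp only [hdisc]
      rw [heq]
      nlinarith
  set τ : EuclideanSpace ℝ (Fin N) → ℝ := fun x => (Real.sqrt (disc x) - b x) / nsq x with hτ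
  set g : EuclideanSpace ℝ (Fin N) → EuclideanSpace ℝ (Fin N) := fun x => x + τ x • d x with hg
  have hnsqne : ∀ x ∈ U, nsq x ≠ 0 := fun x hx => ne_of_gt (real_inner_self_pos' hx.2)
  have hgC : ContDiffOn ℝ (⊤ : ℕ∞) g U := by
    intro x hx
    apply ContDiffAt.contDiffWithinAt
    have h1 : ContDiffAt ℝ (⊤ : ℕ∞) (fun y => Real.sqrt (disc y)) x :=
      (hdiscC.contDiffAt).sqrt (ne_of_gt hx.1)
    have h2 : ContDiffAt ℝ (⊤ : ℕ∞) τ x :=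
      (h1.sub hbC.contDiffAt).div hnsqC.contDiffAt (hnsqne x hx)
    exact contDiffAt_id.add (h2.smul hdC.contDiffAt)
  have hsph : ∀ x ∈ U, ‖g x‖ = 1 := by
    intro x hx
    have hdiscpos := hx.1
    have hnpos : 0 < nsq x := real_inner_self_pos' hx.2
    have hs : Real.sqrt (disc x) ^ 2 = disc x := Real.sq_sqrt hdiscpos.le
    have hexp : ⟪g x, g x⟫ = ⟪x, x⟫ + 2 * (τ x * b x) + τ x ^ 2 * nsq x := by
      simp only [hg]
      rw [real_inner_add_add_self, real_inner_smul_right, real_inner_smul_left,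
        real_inner_smul_right]
      simp only [hb, hnsq]
      ring
    have hτval : τ x * nsq x = Real.sqrt (disc x) - b x := by
      rw [hτ]
      field_simp
    have hdiscval : disc x = b x ^ 2 + nsq x * (1 - ⟪x, x⟫) := rfl
    have e2 : τ x ^ 2 * nsq x * nsq x = (Real.sqrt (disc x) - b x) ^ 2 := by
      have hkey : (τ x * nsq x) ^ 2 = (Real.sqrt (disc x) - b x) ^ 2 := by rw [hτval]
      linear_combination hkey
    have hmain : nsq x * (⟪x, x⟫ + 2 * (τ x * b x) + τ x ^ 2 * nsq x) = nsq x * 1 := by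
      linear_combination (2 * b x) * hτval + e2 + hs + hdiscval
    have h1 : ⟪g x, g x⟫ = 1 := by
      rw [hexp]
      exact mul_left_cancel₀ (ne_of_gt hnpos) hmain
    have h2 : ‖g x‖ ^ 2 = 1 := by rw [← real_inner_self_eq_norm_sq]; exact h1
    nlinarith [norm_nonneg (g x)]
  have hbdy : ∀ x : EuclideanSpace ℝ (Fin N), ‖x‖ = 1 → g x = x := by
    intro x hx1
    have hb0 := hbpos x hx1
    have hxx : ⟪x, x⟫ = (1 : ℝ) := by
      rw [real_inner_self_eq_norm_sq, hx1]; norm_num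
    have hdisceq : disc x = b x ^ 2 := by
      simp only [hdisc]
      rw [hxx]
      ring
    have hτ0 : τ x = 0 := by
      show (Real.sqrt (disc x) - b x) / nsq x = 0
      rw [hdisceq, Real.sqrt_sq hb0.le, sub_self, zero_div]
    simp only [hg, hτ0, zero_smul, add_zero]
  exact absurd (no_retraction U hUopen hBU g hgC hsph hbdy) not_false

theorem exists_smooth_approx (f : EuclideanSpace ℝ (Fin N) → EuclideanSpace ℝ (Fin N))
    (hf : ContinuousOn f (closedBall 0 1)) {ε : ℝ} (hε : 0 < ε) :
    ∃ p : EuclideanSpace ℝ (Fin N) → EuclideanSpace ℝ (Fin N),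
      ContDiff ℝ (⊤ : ℕ∞) p ∧ ∀ x ∈ closedBall (0 : EuclideanSpace ℝ (Fin N)) 1, ‖p x - f x‖ < ε := by
  classical
  have hBc : IsCompact (closedBall (0 : EuclideanSpace ℝ (Fin N)) 1) := isCompact_closedBall _ _
  haveI : CompactSpace (closedBall (0 : EuclideanSpace ℝ (Fin N)) 1) :=
    isCompact_iff_compactSpace.mp hBc
  set X := closedBall (0 : EuclideanSpace ℝ (Fin N)) 1 with hX
  set coordFn : Fin N → C(X, ℝ) := fun i =>
    ⟨fun x => (x : EuclideanSpace ℝ (Fin N)) i,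
      (EuclideanSpace.proj i).continuous.comp continuous_subtype_val⟩ with hcoord
  set Alg : Subalgebra ℝ C(X, ℝ) := Algebra.adjoin ℝ (Set.range coordFn) with hAlg
  have hsep : Alg.SeparatesPoints := by
    intro x y hxy
    have hex : ∃ i, (x : EuclideanSpace ℝ (Fin N)) i ≠ (y : EuclideanSpace ℝ (Fin N)) i := by
      by_contra hcon
      push_neg at hcon
      exact hxy (Subtype.ext (WithLp.ofLp_injective 2 (funext fun i => hcon i)))
    obtain ⟨i, hi⟩ := hex
    exact ⟨coordFn i, ⟨coordFn i, Algebra.subset_adjoin ⟨i, rfl⟩, rfl⟩, hi⟩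
  -- every element of the subalgebra extends to a smooth function
  have hsmooth : ∀ g ∈ Alg, ∃ G : EuclideanSpace ℝ (Fin N) → ℝ,
      ContDiff ℝ (⊤ : ℕ∞) G ∧ ∀ x : X, G x = g x := by
    intro g hg
    induction hg using Algebra.adjoin_induction with
    | mem gg hgg =>
      obtain ⟨i, rfl⟩ := hgg
      exact ⟨fun v => v i, (EuclideanSpace.proj (𝕜 := ℝ) i).contDiff, fun x => rfl⟩
    | algebraMap r => exact ⟨fun _ => r, contDiff_const, fun x => rfl⟩
    | add g₁ g₂ h₁ h₂ ih₁ ih₂ =>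
      obtain ⟨G₁, hG₁, he₁⟩ := ih₁
      obtain ⟨G₂, hG₂, he₂⟩ := ih₂
      exact ⟨fun v => G₁ v + G₂ v, hG₁.add hG₂, fun x => by
        simp [he₁ x, he₂ x]⟩
    | mul g₁ g₂ h₁ h₂ ih₁ ih₂ =>
      obtain ⟨G₁, hG₁, he₁⟩ := ih₁
      obtain ⟨G₂, hG₂, he₂⟩ := ih₂
      exact ⟨fun v => G₁ v * G₂ v, hG₁.mul hG₂, fun x => by
        simp [he₁ x, he₂ x]⟩
  -- approximate each coordinate
  set ε' : ℝ := ε / (Real.sqrt N + 1) with hε'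
  have hsqrtN : (0 : ℝ) ≤ Real.sqrt N := Real.sqrt_nonneg _
  have hε'pos : 0 < ε' := div_pos hε (by linarith)
  have hcoordf : ∀ i : Fin N, Continuous fun z : X => f z i := by
    intro i
    exact (EuclideanSpace.proj (𝕜 := ℝ) i).continuous.comp hf.restrict
  have happrox : ∀ i : Fin N, ∃ G : EuclideanSpace ℝ (Fin N) → ℝ,
      ContDiff ℝ (⊤ : ℕ∞) G ∧ ∀ x : X, ‖G x - f x i‖ < ε' := by
    intro i
    obtain ⟨g, hg⟩ := ContinuousMap.exists_mem_subalgebra_near_continuous_of_separatesPoints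
      Alg hsep (fun z : X => f z i) (hcoordf i) ε' hε'pos
    obtain ⟨G, hGs, hGe⟩ := hsmooth (g : C(X, ℝ)) g.2
    exact ⟨G, hGs, fun x => by rw [hGe x]; exact hg x⟩
  choose G hGs hGe using happrox
  set e := EuclideanSpace.equiv (Fin N) ℝ with he
  refine ⟨fun v => e.symm (fun i => G i v), ?_, ?_⟩
  · exact e.symm.contDiff.comp (contDiff_pi.2 hGs)
  · intro x hx
    have hxX : x ∈ X := hx
    have hcoordbound : ∀ i, ‖G i x - f x i‖ ≤ ε' := fun i => (hGe i ⟨x, hxX⟩).le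
    have hnorm : ‖e.symm (fun i => G i x) - f x‖
        = Real.sqrt (∑ i, ‖G i x - f x i‖ ^ 2) := by
      rw [EuclideanSpace.norm_eq]
      congr 1
    have hsum : (∑ i, ‖G i x - f x i‖ ^ 2) ≤ (N : ℝ) * ε' ^ 2 := by
      calc (∑ i, ‖G i x - f x i‖ ^ 2) ≤ ∑ _i : Fin N, ε' ^ 2 :=
            Finset.sum_le_sum fun i _ =>
              pow_le_pow_left₀ (norm_nonneg _) (hcoordbound i) 2
        _ = (N : ℝ) * ε' ^ 2 := by simp [mul_comm]
    rw [hnorm]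
    calc Real.sqrt (∑ i, ‖G i x - f x i‖ ^ 2) ≤ Real.sqrt ((N : ℝ) * ε' ^ 2) :=
          Real.sqrt_le_sqrt hsum
      _ = Real.sqrt N * ε' := by
          rw [Real.sqrt_mul (Nat.cast_nonneg N), Real.sqrt_sq hε'pos.le]
      _ < (Real.sqrt N + 1) * ε' := by nlinarith
      _ = ε := by
          rw [hε']
          field_simp
  

theorem brouwer_ball (f : EuclideanSpace ℝ (Fin N) → EuclideanSpace ℝ (Fin N))
    (hf : ContinuousOn f (closedBall 0 1)) (hmap : MapsTo f (closedBall 0 1) (closedBall 0 1)) :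
    ∃ x ∈ closedBall (0 : EuclideanSpace ℝ (Fin N)) 1, f x = x := by
  by_contra hcon
  push_neg at hcon
  have hBc : IsCompact (closedBall (0 : EuclideanSpace ℝ (Fin N)) 1) := isCompact_closedBall _ _
  have hBne : (closedBall (0 : EuclideanSpace ℝ (Fin N)) 1).Nonempty :=
    ⟨0, mem_closedBall_self zero_le_one⟩
  have hcont : ContinuousOn (fun x => ‖x - f x‖) (closedBall (0 : EuclideanSpace ℝ (Fin N)) 1) :=
    (continuousOn_id.sub hf).norm
  obtain ⟨x₀, hx₀B, hmin⟩ := hBc.exists_isMinOn hBne hcont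
  set δ : ℝ := ‖x₀ - f x₀‖ with hδ
  have hδpos : 0 < δ := by
    rw [hδ, norm_pos_iff, sub_ne_zero]
    exact fun h => hcon x₀ hx₀B h.symm
  have hδle : ∀ x ∈ closedBall (0 : EuclideanSpace ℝ (Fin N)) 1, δ ≤ ‖x - f x‖ :=
    fun x hx => hmin hx
  have hεpos : (0 : ℝ) < δ / 4 := by linarith
  obtain ⟨p, hps, hperr⟩ := exists_smooth_approx f hf hεpos
  set ε : ℝ := δ / 4 with hεdef
  set c : ℝ := (1 + ε)⁻¹ with hcdef
  have h1ε : (0 : ℝ) < 1 + ε := by positivity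
  have hc0 : 0 < c := inv_pos.2 h1ε
  have hc1 : c ≤ 1 := by
    rw [hcdef]
    rw [inv_le_one_iff₀]
    right; linarith
  set q : EuclideanSpace ℝ (Fin N) → EuclideanSpace ℝ (Fin N) := fun x => c • p x with hq
  have hqs : ContDiff ℝ (⊤ : ℕ∞) q := hps.const_smul c
  have hpbound : ∀ x ∈ closedBall (0 : EuclideanSpace ℝ (Fin N)) 1, ‖p x‖ ≤ 1 + ε := by
    intro x hx
    have h2 : ‖p x‖ ≤ ‖f x‖ + ‖p x - f x‖ := by
      calc ‖p x‖ = ‖f x + (p x - f x)‖ := by rw [add_sub_cancel]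
        _ ≤ ‖f x‖ + ‖p x - f x‖ := norm_add_le _ _
    have h3 : ‖f x‖ ≤ 1 := mem_closedBall_zero_iff.1 (hmap hx)
    have h4 := (hperr x hx).le
    linarith
  have hqmap : MapsTo q (closedBall (0 : EuclideanSpace ℝ (Fin N)) 1)
      (closedBall (0 : EuclideanSpace ℝ (Fin N)) 1) := by
    intro x hx
    rw [mem_closedBall_zero_iff, hq]
    rw [norm_smul, Real.norm_of_nonneg hc0.le]
    calc c * ‖p x‖ ≤ c * (1 + ε) := mul_le_mul_of_nonneg_left (hpbound x hx) hc0.le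
      _ = 1 := inv_mul_cancel₀ h1ε.ne'
  obtain ⟨x₁, hx₁, hfix⟩ := brouwer_smooth q hqs hqmap
  have herr : ‖q x₁ - p x₁‖ ≤ ε := by
    have : q x₁ - p x₁ = (c - 1) • p x₁ := by
      rw [hq, sub_smul, one_smul]
    rw [this, norm_smul, Real.norm_eq_abs, abs_of_nonpos (by linarith)]
    have hbp := hpbound x₁ hx₁
    have hnn := norm_nonneg (p x₁)
    have hkey : (1 - c) * (1 + ε) = ε := by
      rw [hcdef]
      field_simp
      ring
    calc -(c - 1) * ‖p x₁‖ = (1 - c) * ‖p x₁‖ := by ring_nf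
      _ ≤ (1 - c) * (1 + ε) := mul_le_mul_of_nonneg_left hbp (by linarith)
      _ = ε := hkey
  have hfinal : ‖x₁ - f x₁‖ ≤ 2 * ε := by
    calc ‖x₁ - f x₁‖ = ‖q x₁ - f x₁‖ := by rw [hfix]
      _ ≤ ‖q x₁ - p x₁‖ + ‖p x₁ - f x₁‖ := by
          have : q x₁ - f x₁ = (q x₁ - p x₁) + (p x₁ - f x₁) := by abel
          rw [this]; exact norm_add_le _ _
      _ ≤ ε + ε := add_le_add herr (hperr x₁ hx₁).le
      _ = 2 * ε := by ring
  have := hδle x₁ hx₁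
  rw [hεdef] at hfinal
  linarith

theorem brouwer_euclidean {K : Set (EuclideanSpace ℝ (Fin N))}
    (hne : K.Nonempty) (hc : IsCompact K) (hv : Convex ℝ K)
    (f : EuclideanSpace ℝ (Fin N) → EuclideanSpace ℝ (Fin N))
    (hf : ContinuousOn f K) (hmap : MapsTo f K K) : ∃ x ∈ K, f x = x := by
  obtain ⟨R, hR⟩ := hc.isBounded.subset_closedBall 0
  set R' : ℝ := max R 1 with hR'
  have hR'pos : (0 : ℝ) < R' := lt_of_lt_of_le one_pos (le_max_right _ _)
  have hKB : K ⊆ closedBall 0 R' :=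
    hR.trans (closedBall_subset_closedBall (le_max_left _ _))
  set P := projPt hne hc hv with hP
  set h : EuclideanSpace ℝ (Fin N) → EuclideanSpace ℝ (Fin N) := fun x => f (P x) with hh
  have hhcont : Continuous h := by
    rw [hh]
    rw [← continuousOn_univ]
    exact hf.comp (projPt_continuous hne hc hv).continuousOn
      (fun x _ => projPt_mem hne hc hv x)
  have hhK : ∀ x, h x ∈ K := fun x => hmap (projPt_mem hne hc hv x)
  set F : EuclideanSpace ℝ (Fin N) → EuclideanSpace ℝ (Fin N) :=
    fun y => (R'⁻¹ : ℝ) • h (R' • y) with hF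
  have hFc : ContinuousOn F (closedBall 0 1) :=
    ((hhcont.comp (continuous_const_smul R')).const_smul (R'⁻¹ : ℝ)).continuousOn
  have hFmap : MapsTo F (closedBall 0 1) (closedBall 0 1) := by
    intro y _
    rw [mem_closedBall_zero_iff, hF]
    have hb : ‖h (R' • y)‖ ≤ R' := mem_closedBall_zero_iff.1 (hKB (hhK (R' • y)))
    rw [norm_smul, norm_inv, Real.norm_of_nonneg hR'pos.le]
    calc R'⁻¹ * ‖h (R' • y)‖ ≤ R'⁻¹ * R' := by
          exact mul_le_mul_of_nonneg_left hb (inv_nonneg.2 hR'pos.le)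
      _ = 1 := inv_mul_cancel₀ hR'pos.ne'
  obtain ⟨y, _, hfix⟩ := brouwer_ball F hFc hFmap
  have hx : h (R' • y) = R' • y := by
    have := congrArg (fun z => R' • z) hfix
    simpa [hF, smul_smul, mul_inv_cancel₀ hR'pos.ne'] using this
  set x := R' • y with hxdef
  have hxK : x ∈ K := hx ▸ hhK x
  have hPx : P x = x := projPt_eq_self hne hc hv hxK
  refine ⟨x, hxK, ?_⟩
  have : h x = x := hx
  simp only [hh] at this
  rwa [hPx] at this

end NoRetraction

theorem brouwer_general {V : Type*} [NormedAddCommGroup V] [NormedSpace ℝ V]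
    [FiniteDimensional ℝ V] {K : Set V} (hne : K.Nonempty) (hc : IsCompact K) (hv : Convex ℝ K)
    (f : V → V) (hf : ContinuousOn f K) (hmap : MapsTo f K K) : ∃ x ∈ K, f x = x := by
  set ψ : V ≃L[ℝ] EuclideanSpace ℝ (Fin (Module.finrank ℝ V)) := toEuclidean with hψ
  set K' : Set (EuclideanSpace ℝ (Fin (Module.finrank ℝ V))) := ψ '' K with hK'
  have hne' : K'.Nonempty := hne.image ψ
  have hc' : IsCompact K' := hc.image ψ.continuous
  have hv' : Convex ℝ K' := by
    have := hv.linear_image (ψ.toLinearEquiv.toLinearMap)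
    simpa [hK'] using this
  have hsymm_mem : ∀ y ∈ K', ψ.symm y ∈ K := by
    rintro y ⟨x, hx, rfl⟩
    simpa using hx
  set F : EuclideanSpace ℝ (Fin (Module.finrank ℝ V)) →
      EuclideanSpace ℝ (Fin (Module.finrank ℝ V)) := fun y => ψ (f (ψ.symm y)) with hF
  have hFc : ContinuousOn F K' :=
    ψ.continuous.comp_continuousOn (hf.comp ψ.symm.continuous.continuousOn hsymm_mem)
  have hFmap : MapsTo F K' K' := fun y hy => ⟨f (ψ.symm y), hmap (hsymm_mem y hy), rfl⟩
  obtain ⟨y, hyK', hfix⟩ := brouwer_euclidean hne' hc' hv' F hFc hFmap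
  refine ⟨ψ.symm y, hsymm_mem y hyK', ?_⟩
  have := congrArg ψ.symm hfix
  simpa [hF] using this

/-- Existence of a first-order Nash equilibrium for a continuously differentiable
    min-max game over nonempty compact convex sets. -/
theorem exists_first_order_nash {m n : ℕ}
    (f : EuclideanSpace ℝ (Fin m) → EuclideanSpace ℝ (Fin n) → ℝ)
    (Gθ : EuclideanSpace ℝ (Fin m) → EuclideanSpace ℝ (Fin n) → EuclideanSpace ℝ (Fin m))
    (Gα : EuclideanSpace ℝ (Fin m) → EuclideanSpace ℝ (Fin n) → EuclideanSpace ℝ (Fin n))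
    (Θ : Set (EuclideanSpace ℝ (Fin m))) (A : Set (EuclideanSpace ℝ (Fin n)))
    (hΘne : Θ.Nonempty) (hΘc : IsCompact Θ) (hΘv : Convex ℝ Θ)
    (hAne : A.Nonempty) (hAc : IsCompact A) (hAv : Convex ℝ A)
    (hf : Continuous (fun p : EuclideanSpace ℝ (Fin m) × EuclideanSpace ℝ (Fin n) => f p.1 p.2))
    (hGθ : ∀ θ α, HasGradientAt (fun t => f t α) (Gθ θ α) θ)
    (hGα : ∀ θ α, HasGradientAt (fun a => f θ a) (Gα θ α) α)
    (hcont : Continuous (fun p : EuclideanSpace ℝ (Fin m) × EuclideanSpace ℝ (Fin n) =>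
      (Gθ p.1 p.2, Gα p.1 p.2))) :
    ∃ θb ∈ Θ, ∃ αb ∈ A,
      (∀ θ ∈ Θ, 0 ≤ ⟪Gθ θb αb, θ - θb⟫) ∧
      (∀ α ∈ A, ⟪Gα θb αb, α - αb⟫ ≤ 0) := by
  classical
  set T : (EuclideanSpace ℝ (Fin m) × EuclideanSpace ℝ (Fin n)) →
      (EuclideanSpace ℝ (Fin m) × EuclideanSpace ℝ (Fin n)) :=
    fun p => (projPt hΘne hΘc hΘv (p.1 - Gθ p.1 p.2), projPt hAne hAc hAv (p.2 + Gα p.1 p.2))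
    with hT
  have hGθc : Continuous fun p : EuclideanSpace ℝ (Fin m) × EuclideanSpace ℝ (Fin n) =>
      Gθ p.1 p.2 := hcont.fst
  have hGαc : Continuous fun p : EuclideanSpace ℝ (Fin m) × EuclideanSpace ℝ (Fin n) =>
      Gα p.1 p.2 := hcont.snd
  have hTc : Continuous T := by
    apply Continuous.prodMk
    · exact (projPt_continuous hΘne hΘc hΘv).comp (continuous_fst.sub hGθc)
    · exact (projPt_continuous hAne hAc hAv).comp (continuous_snd.add hGαc)
  obtain ⟨⟨θb, αb⟩, hmem, hfix⟩ :=
    brouwer_general (hΘne.prod hAne) (hΘc.prod hAc) (hΘv.prod hAv) T hTc.continuousOn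
      (fun p _ => ⟨projPt_mem hΘne hΘc hΘv _, projPt_mem hAne hAc hAv _⟩)
  obtain ⟨hθb, hαb⟩ := hmem
  simp only [hT, Prod.mk.injEq] at hfix
  obtain ⟨h1, h2⟩ := hfix
  refine ⟨θb, hθb, αb, hαb, ?_, ?_⟩
  · intro θ hθ
    have := projPt_inner hΘne hΘc hΘv (θb - Gθ θb αb) θ hθ
    rw [h1] at this
    have e : θb - Gθ θb αb - θb = -(Gθ θb αb) := by abel
    rw [e, inner_neg_left] at this
    linarith
  · intro α hα
    have := projPt_inner hAne hAc hAv (αb + Gα θb αb) α hα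
    rw [h2] at this
    have e : αb + Gα θb αb - αb = Gα θb αb := by abel
    rw [e] at this
    linarith
end
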